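/- arXiv:1905.00003 — 6 statements merged into one kernel-verified Lean document; each statement's English description precedes it below -/
import Mathlib

section
/- Let n ≥ 7 and let t be an integer with 2 ≤ t ≤ ⌊(n−1)/2⌋ − 1, and set M := n − t − 2. Let F be a finite field whose characteristic divides t, let V be a finite-dimensional F-vector space, and let A_1,…,A_M, B_1,…,B_{t+1}, C be subspaces of V. Then inequality (a) holds: H(B_1,…,B_{t+1},A_{t+2},…,A_M) + (t+2)(M−t−1)·H(C) ≤ (M−1)·I(A_1+⋯+A_M ; C) + (t+2)·Σ_{i=t+2}^{M} H(A_i) + ((t+2)(M−t)−1)·( H(C | A_1,…,A_M) + Σ_{i=1}^{M} I(Σ_{j∈[M], j≠i} A_j ; C) ) + Σ_{i=1}^{t+1} ( H(B_i | A_j : j∈[M], j≠i) + H(B_i | A_i, C) + I(A_1+⋯+A_i ; A_{i+1}+⋯+A_{t+1}) + I(A_1+⋯+A_{i−1} ; A_i) ). -/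
open Finset

variable {F V : Type*} [Field F] [AddCommGroup V] [Module F V]

/-- `eH X` is the dimension of the subspace `X`, as an integer
(the "entropy" `H(X)` of the paper). -/
noncomputable def eH (X : Submodule F V) : ℤ := Module.finrank F X

/-- Left-hand side of inequality (a):
`H(B_1,…,B_{t+1},A_{t+2},…,A_M) + (t+2)(M−t−1)·H(C)`. -/
noncomputable def lhsA (t M : ℕ) (A B : ℕ → Submodule F V) (C : Submodule F V) : ℤ :=
  eH ((∑ i ∈ Icc 1 (t+1), B i) + ∑ i ∈ Icc (t+2) M, A i)
    + ((t : ℤ) + 2) * ((M : ℤ) - t - 1) * eH C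

/-- Right-hand side of inequality (a):
`(M−1)·I(A_1+⋯+A_M ; C) + (t+2)·Σ_{i=t+2}^{M} H(A_i)
 + ((t+2)(M−t)−1)·( H(C | A_1,…,A_M) + Σ_{i=1}^{M} I(Σ_{j≠i} A_j ; C) )
 + Σ_{i=1}^{t+1} ( H(B_i | A_j : j≠i) + H(B_i | A_i, C)
      + I(A_1+⋯+A_i ; A_{i+1}+⋯+A_{t+1}) + I(A_1+⋯+A_{i−1} ; A_i) )`. -/
noncomputable def rhsA (t M : ℕ) (A B : ℕ → Submodule F V) (C : Submodule F V) : ℤ :=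
  ((M : ℤ) - 1) * eH ((∑ i ∈ Icc 1 M, A i) ⊓ C)
  + ((t : ℤ) + 2) * ∑ i ∈ Icc (t+2) M, eH (A i)
  + (((t : ℤ) + 2) * ((M : ℤ) - t) - 1) *
      ((eH (C + ∑ i ∈ Icc 1 M, A i) - eH (∑ i ∈ Icc 1 M, A i))
        + ∑ i ∈ Icc 1 M, eH ((∑ j ∈ (Icc 1 M).erase i, A j) ⊓ C))
  + ∑ i ∈ Icc 1 (t+1),
      ((eH (B i + ∑ j ∈ (Icc 1 M).erase i, A j) - eH (∑ j ∈ (Icc 1 M).erase i, A j))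
        + (eH (B i + (A i + C)) - eH (A i + C))
        + eH ((∑ j ∈ Icc 1 i, A j) ⊓ (∑ j ∈ Icc (i+1) (t+1), A j))
        + eH ((∑ j ∈ Icc 1 (i-1), A j) ⊓ A i))

/-- Inequality (a) of the paper. -/
def IneqA (t M : ℕ) (A B : ℕ → Submodule F V) (C : Submodule F V) : Prop :=
  lhsA t M A B C ≤ rhsA t M A B C

/-!
Write `S = A_1 + ⋯ + A_M`, `N = A_{t+2} + ⋯ + A_M` and `P_k = A_1 + ⋯ + A_k`.

Replacing each `B_i` by `B_i ∩ (Σ_{j≠i} A_j) ∩ (A_i + C)` costs at most the two conditional terms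
of `B_i`, and the truncated spaces lie in `Σ_{j≠i} A_j` and in `A_i + (S ∩ C)`. Modulo `N` and the
overlaps `P_k ∩ (A_{k+1} + ⋯ + A_{t+1} + N)`, the spaces `A_1, …, A_{t+1}` become independent.
For independent `U_1, …, U_{t+1}` with projections `p_i` and `q = Σ p_i`, a space `B_i` contained
in `Σ_{j≠i} U_j` and in `U_i + C` lies in the image of `C` under `q - p_i`; since the characteristic
divides `t`, these `t + 1` maps sum to `t • q = 0`, so `H(B_1, …, B_{t+1}) ≤ t · H(C)`.

The overlaps split into `I(P_k ; A_{k+1} + ⋯ + A_{t+1}) + I(P_{t+1} ; N)` by submodularity, and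
telescoping `H(P_i) - H(P_{i-1}) ≥ I(S ; C) - I(Σ_{j≠i} A_j ; C)` over `i > t + 1` pays for the
surplus `(M - t - 1) · I(S ; C)` on the left.
-/

theorem sum_Icc_add_sum_Icc {M : Type*} [AddCommMonoid M] (f : ℕ → M) {a b c : ℕ}
    (hab : a ≤ b + 1) (hbc : b ≤ c) :
    ∑ i ∈ Icc a b, f i + ∑ i ∈ Icc (b + 1) c, f i = ∑ i ∈ Icc a c, f i := by
  simp only [← Ico_add_one_right_eq_Icc]
  exact sum_Ico_consecutive f hab (by omega)

theorem sum_Icc_erase {M : Type*} [AddCommMonoid M] (f : ℕ → M) {a b i : ℕ}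
    (hi : 0 < i) (hai : a ≤ i) (hib : i ≤ b) :
    ∑ j ∈ (Icc a b).erase i, f j = ∑ j ∈ Icc a (i - 1), f j + ∑ j ∈ Icc (i + 1) b, f j := by
  rw [← sum_union (disjoint_left.mpr fun j hj hj' => by simp only [mem_Icc] at hj hj'; omega)]
  congr 1
  ext j
  simp only [mem_erase, mem_Icc, mem_union]
  omega

theorem sum_Icc_erase_eq_add {M : Type*} [AddCommMonoid M] (f : ℕ → M) {a b c i : ℕ}
    (hab : a ≤ b + 1) (hib : i ≤ b) (hbc : b ≤ c) :
    ∑ j ∈ (Icc a c).erase i, f j =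
      ∑ j ∈ (Icc a b).erase i, f j + ∑ j ∈ Icc (b + 1) c, f j := by
  rw [← sum_union (disjoint_left.mpr fun j hj hj' => by
    simp only [mem_erase, mem_Icc] at hj hj'; omega)]
  congr 1
  ext j
  simp only [mem_erase, mem_Icc, mem_union]
  omega

theorem sum_Icc_sub_pred {M : Type*} [AddCommGroup M] (g : ℕ → M) {a b : ℕ} (hab : a ≤ b) :
    ∑ i ∈ Icc (a + 1) b, (g i - g (i - 1)) = g b - g a := by
  induction b, hab using Nat.le_induction with
  | base => simp
  | succ b hab ih =>
    rw [sum_Icc_succ_top (by omega), ih, Nat.add_sub_cancel]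
    abel

theorem Submodule.map_sum {ι W : Type*} [AddCommGroup W] [Module F W] (f : V →ₗ[F] W)
    (s : Finset ι) (X : ι → Submodule F V) :
    (∑ i ∈ s, X i).map f = ∑ i ∈ s, (X i).map f := by
  classical
  induction s using Finset.induction_on with
  | empty => simp
  | insert a s ha ih => simp only [sum_insert ha, Submodule.add_eq_sup, Submodule.map_sup, ih]

theorem Submodule.sum_le_of_forall_le {ι : Type*} {s : Finset ι} {X : ι → Submodule F V}
    {Y : Submodule F V} (h : ∀ i ∈ s, X i ≤ Y) : ∑ i ∈ s, X i ≤ Y :=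
  Finset.sup_le h

theorem inf_sup_le_sup_sum_inf_sup {P Q : ℕ → Submodule F V} (hP : Monotone P)
    (hQ : Antitone Q) (N : Submodule F V) {s : Finset ℕ} {k : ℕ} (hk : k ∈ s) :
    P k ⊓ (Q k ⊔ (N ⊔ ∑ l ∈ s, P l ⊓ (Q l ⊔ N))) ≤ N ⊔ ∑ l ∈ s, P l ⊓ (Q l ⊔ N) := by
  set G := ∑ l ∈ s with l ≤ k, P l ⊓ (Q l ⊔ N)
  have hG : G ≤ P k :=
    Submodule.sum_le_of_forall_le fun l hl => inf_le_left.trans (hP (mem_filter.mp hl).2)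
  have hlate : ∑ l ∈ s with ¬l ≤ k, P l ⊓ (Q l ⊔ N) ≤ Q k ⊔ N :=
    Submodule.sum_le_of_forall_le fun l hl =>
      inf_le_right.trans (sup_le_sup_right (hQ (not_le.mp (mem_filter.mp hl).2).le) N)
  have hQD : Q k ⊔ (N ⊔ ∑ l ∈ s, P l ⊓ (Q l ⊔ N)) ≤ Q k ⊔ N ⊔ G := by
    rw [← sum_filter_add_sum_filter_not s (· ≤ k), Submodule.add_eq_sup]
    exact sup_le (le_sup_left.trans le_sup_left)
      (sup_le (le_sup_right.trans le_sup_left) (sup_le le_sup_right (hlate.trans le_sup_left)))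
  calc P k ⊓ (Q k ⊔ (N ⊔ ∑ l ∈ s, P l ⊓ (Q l ⊔ N)))
      ≤ P k ⊓ (Q k ⊔ N ⊔ G) := inf_le_inf_left _ hQD
    _ = P k ⊓ (Q k ⊔ N) ⊔ G := (inf_sup_assoc_of_le _ hG).symm
    _ ≤ N ⊔ ∑ l ∈ s, P l ⊓ (Q l ⊔ N) :=
      sup_le ((single_le_sum_of_canonicallyOrdered (f := fun l => P l ⊓ (Q l ⊔ N)) hk).trans
        le_sup_right) ((sum_le_sum_of_subset (filter_subset _ s)).trans le_sup_right)

theorem disjoint_map_mkQ_of_inf_sup_le {P Q D : Submodule F V} (h : P ⊓ (Q ⊔ D) ≤ D) :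
    Disjoint (P.map D.mkQ) (Q.map D.mkQ) := by
  rw [disjoint_iff, ← (Submodule.comap_injective_of_surjective D.mkQ_surjective).eq_iff,
    Submodule.comap_inf, Submodule.comap_map_mkQ, Submodule.comap_map_mkQ, Submodule.comap_bot,
    Submodule.ker_mkQ, sup_comm D Q, sup_inf_assoc_of_le P (le_sup_right : D ≤ Q ⊔ D)]
  exact le_antisymm (sup_le le_rfl h) le_sup_left

theorem disjoint_sum_erase_of_disjoint_sum_Icc (U : ℕ → Submodule F V) (t : ℕ)
    (h : ∀ k ∈ Icc 1 t, Disjoint (∑ j ∈ Icc 1 k, U j) (∑ j ∈ Icc (k + 1) (t + 1), U j)) :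
    ∀ i ∈ Icc 1 (t + 1), Disjoint (U i) (∑ j ∈ (Icc 1 (t + 1)).erase i, U j) := by
  intro i hi
  rw [mem_Icc] at hi
  rw [sum_Icc_erase U (by omega) hi.1 hi.2, Submodule.add_eq_sup]
  refine Disjoint.disjoint_sup_right_of_disjoint_sup_left ?_ ?_
  · rcases Nat.lt_or_ge 1 i with hi1 | hi1
    · have hU : U i ≤ ∑ j ∈ Icc (i - 1 + 1) (t + 1), U j :=
        single_le_sum_of_canonicallyOrdered (by simp only [mem_Icc]; omega)
      exact ((h (i - 1) (by simp only [mem_Icc]; omega)).mono_right hU).symm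
    · simp [Icc_eq_empty_of_lt (by omega : i - 1 < 1)]
  · rcases Nat.lt_or_ge i (t + 1) with hit | hit
    · have hP : U i ⊔ ∑ j ∈ Icc 1 (i - 1), U j = ∑ j ∈ Icc 1 i, U j := by
        obtain ⟨k, rfl⟩ : ∃ k, i = k + 1 := ⟨i - 1, by omega⟩
        rw [sum_Icc_succ_top (by omega), Submodule.add_eq_sup, sup_comm, Nat.add_sub_cancel]
      rw [hP]
      exact h i (by simp only [mem_Icc]; omega)
    · simp [Icc_eq_empty_of_lt (by omega : t + 1 < i + 1)]

theorem eH_nonneg (X : Submodule F V) : 0 ≤ eH X := Int.natCast_nonneg _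

theorem eH_bot : eH (⊥ : Submodule F V) = 0 := by simp [eH]

section FiniteDimensional

variable [FiniteDimensional F V]

theorem eH_mono {X Y : Submodule F V} (h : X ≤ Y) : eH X ≤ eH Y := by
  unfold eH
  exact_mod_cast Submodule.finrank_mono h

theorem eH_map_le {W : Type*} [AddCommGroup W] [Module F W] (f : V →ₗ[F] W)
    (X : Submodule F V) : eH (X.map f) ≤ eH X := by
  unfold eH
  exact_mod_cast Submodule.finrank_map_le f X

theorem eH_sup_add_eH_inf (X Y : Submodule F V) :
    eH (X ⊔ Y) + eH (X ⊓ Y) = eH X + eH Y := by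
  unfold eH
  exact_mod_cast Submodule.finrank_sup_add_finrank_inf_eq X Y

theorem eH_sup_le (X Y : Submodule F V) : eH (X ⊔ Y) ≤ eH X + eH Y := by
  linarith [eH_sup_add_eH_inf X Y, eH_nonneg (X ⊓ Y)]

theorem eH_sum_le {ι : Type*} (s : Finset ι) (X : ι → Submodule F V) :
    eH (∑ i ∈ s, X i) ≤ ∑ i ∈ s, eH (X i) :=
  le_sum_of_subadditive eH eH_bot.le eH_sup_le s X

theorem eH_sup_add_eH_le_of_le {X Y : Submodule F V} (h : X ≤ Y) (Z : Submodule F V) :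
    eH (Y ⊔ Z) + eH X ≤ eH (X ⊔ Z) + eH Y := by
  have hsup : Y ⊔ (X ⊔ Z) = Y ⊔ Z := by rw [← sup_assoc, sup_eq_left.mpr h]
  have hmod := eH_sup_add_eH_inf Y (X ⊔ Z)
  rw [hsup] at hmod
  linarith [eH_mono (le_inf h le_sup_left : X ≤ Y ⊓ (X ⊔ Z))]

theorem eH_inf_add_eH_le_of_le {X Y : Submodule F V} (h : X ≤ Y) (Z : Submodule F V) :
    eH (Y ⊓ Z) + eH X ≤ eH (X ⊓ Z) + eH Y := by
  have hinf : Y ⊓ Z ⊓ X = X ⊓ Z := by rw [inf_right_comm, inf_eq_right.mpr h]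
  have hmod := eH_sup_add_eH_inf (Y ⊓ Z) X
  rw [hinf] at hmod
  linarith [eH_mono (sup_le inf_le_left h : Y ⊓ Z ⊔ X ≤ Y)]

theorem eH_sub_eH_inf_inf_le (B Y Z : Submodule F V) :
    eH B - eH (B ⊓ (Y ⊓ Z)) ≤ (eH (B ⊔ Y) - eH Y) + (eH (B ⊔ Z) - eH Z) := by
  have hY := eH_sup_add_eH_inf B Y
  have hZ := eH_sup_add_eH_inf (B ⊓ Y) Z
  rw [inf_assoc] at hZ
  linarith [eH_mono (sup_le_sup_right inf_le_left Z : B ⊓ Y ⊔ Z ≤ B ⊔ Z)]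

theorem eH_inf_sup_le (X Y N : Submodule F V) :
    eH (X ⊓ (Y ⊔ N)) ≤ eH (X ⊓ Y) + eH ((X ⊔ Y) ⊓ N) := by
  have hinf : X ⊓ (Y ⊔ N) ⊓ Y = X ⊓ Y := by
    rw [inf_assoc, inf_eq_right.mpr (le_sup_left : Y ≤ Y ⊔ N)]
  have hmod := eH_sup_add_eH_inf (X ⊓ (Y ⊔ N)) Y
  rw [hinf] at hmod
  have hle : X ⊓ (Y ⊔ N) ⊔ Y ≤ Y ⊔ (X ⊔ Y) ⊓ N := by
    rw [inf_comm (X ⊔ Y), ← sup_inf_assoc_of_le N (le_sup_right : Y ≤ X ⊔ Y)]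
    exact sup_le ((inf_le_inf_right _ le_sup_left).trans (by rw [inf_comm]))
      (le_inf le_sup_left le_sup_right)
  linarith [eH_mono hle, eH_sup_le Y ((X ⊔ Y) ⊓ N)]

theorem eH_sup_eq_add_eH_map_mkQ (X D : Submodule F V) :
    eH (X ⊔ D) = eH D + eH (X.map D.mkQ) := by
  have hrank := LinearMap.finrank_range_add_finrank_ker (D.mkQ ∘ₗ (X ⊔ D).subtype)
  rw [LinearMap.range_comp, Submodule.range_subtype, Submodule.map_sup, Submodule.mkQ_map_self,
    sup_bot_eq, LinearMap.ker_comp, Submodule.ker_mkQ,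
    (Submodule.comapSubtypeEquivOfLe le_sup_right).finrank_eq] at hrank
  unfold eH
  omega

theorem eH_sum_sup_add_sum_le {ι : Type*} (s : Finset ι) {B B' : ι → Submodule F V}
    (h : ∀ i ∈ s, B' i ≤ B i) (X : Submodule F V) :
    eH ((∑ i ∈ s, B i) ⊔ X) + ∑ i ∈ s, eH (B' i) ≤
      eH ((∑ i ∈ s, B' i) ⊔ X) + ∑ i ∈ s, eH (B i) := by
  classical
  induction s using Finset.induction_on generalizing X with
  | empty => simp
  | insert a s ha ih =>
    have hstep := eH_sup_add_eH_le_of_le (h a (mem_insert_self a s)) ((∑ i ∈ s, B i) ⊔ X)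
    have hrest := ih (fun i hi => h i (mem_insert_of_mem hi)) (B' a ⊔ X)
    simp only [sum_insert ha, Submodule.add_eq_sup, sup_assoc, sup_left_comm _ (B' a)]
      at hstep hrest ⊢
    linarith

theorem sum_eH_inf_sup_le (U : ℕ → Submodule F V) (N : Submodule F V) (t : ℕ) :
    ∑ k ∈ Icc 1 t, eH ((∑ j ∈ Icc 1 k, U j) ⊓ ((∑ j ∈ Icc (k + 1) (t + 1), U j) ⊔ N)) ≤
      ∑ k ∈ Icc 1 t, eH ((∑ j ∈ Icc 1 k, U j) ⊓ ∑ j ∈ Icc (k + 1) (t + 1), U j)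
        + t * eH ((∑ j ∈ Icc 1 (t + 1), U j) ⊓ N) := by
  have hsplit : ∀ k ∈ Icc 1 t,
      eH ((∑ j ∈ Icc 1 k, U j) ⊓ ((∑ j ∈ Icc (k + 1) (t + 1), U j) ⊔ N)) ≤
        eH ((∑ j ∈ Icc 1 k, U j) ⊓ ∑ j ∈ Icc (k + 1) (t + 1), U j)
          + eH ((∑ j ∈ Icc 1 (t + 1), U j) ⊓ N) := fun k hk => by
    have hsum : (∑ j ∈ Icc 1 k, U j) ⊔ ∑ j ∈ Icc (k + 1) (t + 1), U j =
        ∑ j ∈ Icc 1 (t + 1), U j :=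
      sum_Icc_add_sum_Icc U (by omega) (by simp only [mem_Icc] at hk; omega)
    simpa only [hsum] using
      eH_inf_sup_le (∑ j ∈ Icc 1 k, U j) (∑ j ∈ Icc (k + 1) (t + 1), U j) N
  refine (sum_le_sum hsplit).trans_eq ?_
  simp [sum_add_distrib]

theorem sub_mul_eH_inf_add_eH_inf_le (A : ℕ → Submodule F V) (C : Submodule F V) {a b : ℕ}
    (hab : a ≤ b) :
    ((b : ℤ) - a) * eH ((∑ j ∈ Icc 1 b, A j) ⊓ C)
        + eH ((∑ j ∈ Icc 1 a, A j) ⊓ ∑ j ∈ Icc (a + 1) b, A j) ≤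
      ∑ i ∈ Icc (a + 1) b, eH ((∑ j ∈ (Icc 1 b).erase i, A j) ⊓ C)
        + eH (∑ j ∈ Icc (a + 1) b, A j) := by
  have hstep : ∀ i ∈ Icc (a + 1) b,
      eH ((∑ j ∈ Icc 1 b, A j) ⊓ C) - eH ((∑ j ∈ (Icc 1 b).erase i, A j) ⊓ C) ≤
        eH (∑ j ∈ Icc 1 i, A j) - eH (∑ j ∈ Icc 1 (i - 1), A j) := fun i hi => by
    rw [mem_Icc] at hi
    have hS : (∑ j ∈ (Icc 1 b).erase i, A j) ⊔ A i = ∑ j ∈ Icc 1 b, A j :=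
      sum_erase_add _ _ (by simp only [mem_Icc]; omega)
    have hP : (∑ j ∈ Icc 1 (i - 1), A j) ⊔ A i = ∑ j ∈ Icc 1 i, A j := by
      obtain ⟨k, rfl⟩ : ∃ k, i = k + 1 := ⟨i - 1, by omega⟩
      rw [Nat.add_sub_cancel]
      exact (sum_Icc_succ_top (by omega) A).symm
    have hPS : ∑ j ∈ Icc 1 (i - 1), A j ≤ ∑ j ∈ (Icc 1 b).erase i, A j :=
      sum_le_sum_of_subset fun j hj => by simp only [mem_Icc, mem_erase] at hj ⊢; omega
    have hI := eH_inf_add_eH_le_of_le (hS ▸ le_sup_left) C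
    have hH := eH_sup_add_eH_le_of_le hPS (A i)
    rw [hS, hP] at hH
    linarith
  have htel := sum_Icc_sub_pred (fun k => eH (∑ j ∈ Icc 1 k, A j)) hab
  have hmod := eH_sup_add_eH_inf (∑ j ∈ Icc 1 a, A j) (∑ j ∈ Icc (a + 1) b, A j)
  rw [show (∑ j ∈ Icc 1 a, A j) ⊔ ∑ j ∈ Icc (a + 1) b, A j = ∑ j ∈ Icc 1 b, A j from
    sum_Icc_add_sum_Icc A (by omega) hab] at hmod
  have hsum := sum_le_sum hstep
  rw [sum_sub_distrib, sum_const, Nat.card_Icc, nsmul_eq_mul, htel] at hsum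
  push_cast [Nat.add_sub_add_right, Nat.cast_sub hab] at hsum
  linarith

end FiniteDimensional

section Projection

variable {ι : Type*} [DecidableEq ι]

theorem exists_projection_family (s : Finset ι) (U : ι → Submodule F V)
    (hU : ∀ i ∈ s, Disjoint (U i) (∑ j ∈ s.erase i, U j)) :
    ∃ p : ι → Module.End F V, ∀ i ∈ s,
      (∀ x ∈ U i, p i x = x) ∧ ∀ x ∈ ∑ j ∈ s.erase i, U j, p i x = 0 := by
  obtain ⟨R, hR⟩ := (∑ j ∈ s, U j).exists_isCompl
  have hcompl : ∀ i ∈ s, IsCompl (U i) ((∑ j ∈ s.erase i, U j) ⊔ R) := fun i hi =>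
    (hU i hi).isCompl_sup_right_of_isCompl_sup_left
      (by rwa [← Submodule.add_eq_sup, add_sum_erase s U hi])
  refine ⟨fun i => if hi : i ∈ s then (U i).projection _ (hcompl i hi) else 0,
    fun i hi => ⟨fun x hx => ?_, fun x hx => ?_⟩⟩
  · simp only [dif_pos hi]
    exact Submodule.projection_apply_of_mem_left _ hx
  · simp only [dif_pos hi]
    exact Submodule.projection_apply_of_mem_right _ (Submodule.mem_sup_left hx)

theorem sum_apply_eq_self_of_mem_sum {s : Finset ι} {U : ι → Submodule F V}
    {p : ι → Module.End F V}
    (hp : ∀ i ∈ s, (∀ x ∈ U i, p i x = x) ∧ ∀ x ∈ ∑ j ∈ s.erase i, U j, p i x = 0) :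
    ∀ x ∈ ∑ j ∈ s, U j, ∑ i ∈ s, p i x = x := by
  suffices ∑ j ∈ s, U j ≤ LinearMap.ker (∑ i ∈ s, p i - 1) by
    intro x hx
    simpa [sub_eq_zero] using this hx
  refine Submodule.sum_le_of_forall_le fun j hj x hx => ?_
  rw [LinearMap.mem_ker, LinearMap.sub_apply, LinearMap.sum_apply, sum_eq_single_of_mem j hj,
    (hp j hj).1 x hx, Module.End.one_apply, sub_self]
  intro i hi hij
  exact (hp i hi).2 x
    (single_le_sum_of_canonicallyOrdered (f := U) (mem_erase.mpr ⟨hij.symm, hj⟩) hx)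

variable [FiniteDimensional F V]

theorem eH_sum_range_le_of_sum_eq_zero {X : Type*} [AddCommGroup X] [Module F X]
    [FiniteDimensional F X] {s : Finset ι} (hs : s.Nonempty) (f : ι → X →ₗ[F] V)
    (hf : ∑ i ∈ s, f i = 0) :
    eH (∑ i ∈ s, LinearMap.range (f i)) ≤ ((#s : ℤ) - 1) * Module.finrank F X := by
  obtain ⟨a, ha⟩ := hs
  have hrange : LinearMap.range (f a) ≤ ∑ i ∈ s.erase a, LinearMap.range (f i) := by
    rintro _ ⟨x, rfl⟩
    have hx : f a x = -∑ i ∈ s.erase a, f i x := by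
      rw [eq_neg_iff_add_eq_zero, ← LinearMap.sum_apply, ← LinearMap.add_apply,
        add_sum_erase s f ha, hf, LinearMap.zero_apply]
    rw [hx]
    exact neg_mem (Submodule.sum_mem _ fun i hi =>
      single_le_sum_of_canonicallyOrdered (f := fun i => LinearMap.range (f i)) hi
        (LinearMap.mem_range_self (f i) x))
  calc eH (∑ i ∈ s, LinearMap.range (f i))
      = eH (∑ i ∈ s.erase a, LinearMap.range (f i)) := by
        rw [← add_sum_erase s _ ha, Submodule.add_eq_sup, sup_eq_right.mpr hrange]
    _ ≤ ∑ i ∈ s.erase a, eH (LinearMap.range (f i)) := eH_sum_le _ _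
    _ ≤ ∑ i ∈ s.erase a, (Module.finrank F X : ℤ) :=
        sum_le_sum fun i _ => by unfold eH; exact_mod_cast LinearMap.finrank_range_le (f i)
    _ = ((#s : ℤ) - 1) * Module.finrank F X := by
        rw [sum_const, card_erase_of_mem ha, nsmul_eq_mul, Nat.cast_pred (card_pos.mpr ⟨a, ha⟩)]

theorem eH_sum_le_of_natCast_card_eq_one {s : Finset ι} (hs : (#s : F) = 1)
    (U B : ι → Submodule F V) (C : Submodule F V)
    (hU : ∀ i ∈ s, Disjoint (U i) (∑ j ∈ s.erase i, U j))
    (hB_erase : ∀ i ∈ s, B i ≤ ∑ j ∈ s.erase i, U j) (hB_sup : ∀ i ∈ s, B i ≤ U i ⊔ C) :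
    eH (∑ i ∈ s, B i) ≤ ((#s : ℤ) - 1) * eH C := by
  obtain ⟨p, hp⟩ := exists_projection_family s U hU
  set q := ∑ j ∈ s, p j
  let f : ι → C →ₗ[F] V := fun i => (q - p i) ∘ₗ C.subtype
  have hf : ∑ i ∈ s, f i = 0 := by
    have hq : ∑ i ∈ s, (q - p i) = 0 := by
      rw [sum_sub_distrib, sum_const, ← Nat.cast_smul_eq_nsmul F, hs, one_smul, sub_self]
    ext c
    rw [LinearMap.sum_apply, LinearMap.zero_apply]
    simp only [f, LinearMap.comp_apply]
    rw [← LinearMap.sum_apply, hq, LinearMap.zero_apply]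
  have hB : ∀ i ∈ s, B i ≤ LinearMap.range (f i) := by
    intro i hi b hb
    obtain ⟨α, hα, c, hc, rfl⟩ := Submodule.mem_sup.mp (hB_sup i hi hb)
    have hbV := hB_erase i hi hb
    have hαT : α ∈ ∑ j ∈ s, U j := single_le_sum_of_canonicallyOrdered (f := U) hi hα
    have hcT : c ∈ ∑ j ∈ s, U j := by
      simpa using sub_mem (sum_le_sum_of_subset (f := U) (erase_subset i s) hbV) hαT
    have hpc : p i c = -α := by
      have h0 := (hp i hi).2 _ hbV
      rw [map_add, (hp i hi).1 α hα] at h0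
      exact (neg_eq_of_add_eq_zero_right h0).symm
    refine ⟨⟨c, hc⟩, ?_⟩
    simp only [f, LinearMap.comp_apply, Submodule.coe_subtype, LinearMap.sub_apply, hpc,
      sum_apply_eq_self_of_mem_sum hp c hcT, q, LinearMap.sum_apply]
    abel
  have hne : s.Nonempty := nonempty_iff_ne_empty.mpr fun h => by simp [h] at hs
  calc eH (∑ i ∈ s, B i) ≤ eH (∑ i ∈ s, LinearMap.range (f i)) := eH_mono (sum_le_sum hB)
    _ ≤ ((#s : ℤ) - 1) * eH C := eH_sum_range_le_of_sum_eq_zero hne f hf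

end Projection

section Decomposition

variable [FiniteDimensional F V]

theorem eH_sum_sup_le_of_natCast_eq_zero {t : ℕ} (hchar : (t : F) = 0)
    (U B : ℕ → Submodule F V) (N C : Submodule F V)
    (hB_erase : ∀ i ∈ Icc 1 (t + 1), B i ≤ (∑ j ∈ (Icc 1 (t + 1)).erase i, U j) ⊔ N)
    (hB_sup : ∀ i ∈ Icc 1 (t + 1), B i ≤ U i ⊔ C) :
    eH ((∑ i ∈ Icc 1 (t + 1), B i) ⊔ N) ≤
      eH N + ∑ k ∈ Icc 1 t, eH ((∑ j ∈ Icc 1 k, U j) ⊓ ((∑ j ∈ Icc (k + 1) (t + 1), U j) ⊔ N))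
        + t * eH C := by
  set D := N ⊔ ∑ k ∈ Icc 1 t, (∑ j ∈ Icc 1 k, U j) ⊓ ((∑ j ∈ Icc (k + 1) (t + 1), U j) ⊔ N)
  have hmono : Monotone fun k => ∑ j ∈ Icc 1 k, U j :=
    fun a b hab => sum_le_sum_of_subset (Icc_subset_Icc_right hab)
  have hanti : Antitone fun k => ∑ j ∈ Icc (k + 1) (t + 1), U j :=
    fun a b hab => sum_le_sum_of_subset (Icc_subset_Icc (by omega) le_rfl)
  have hdisj : ∀ k ∈ Icc 1 t, Disjoint (∑ j ∈ Icc 1 k, (U j).map D.mkQ)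
      (∑ j ∈ Icc (k + 1) (t + 1), (U j).map D.mkQ) := fun k hk => by
    rw [← Submodule.map_sum, ← Submodule.map_sum]
    exact disjoint_map_mkQ_of_inf_sup_le (inf_sup_le_sup_sum_inf_sup hmono hanti N hk)
  have hN : N.map D.mkQ = ⊥ := by
    rw [← LinearMap.le_ker_iff_map, Submodule.ker_mkQ]
    exact le_sup_left
  have hB_erase' : ∀ i ∈ Icc 1 (t + 1),
      (B i).map D.mkQ ≤ ∑ j ∈ (Icc 1 (t + 1)).erase i, (U j).map D.mkQ := fun i hi => by
    simpa only [Submodule.map_sup, hN, sup_bot_eq, Submodule.map_sum] using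
      Submodule.map_mono (f := D.mkQ) (hB_erase i hi)
  have hB_sup' : ∀ i ∈ Icc 1 (t + 1), (B i).map D.mkQ ≤ (U i).map D.mkQ ⊔ C.map D.mkQ :=
    fun i hi => (Submodule.map_mono (hB_sup i hi)).trans (Submodule.map_sup _ _ _).le
  have hquot := eH_sum_le_of_natCast_card_eq_one (by simp [hchar])
    (fun j => (U j).map D.mkQ) (fun i => (B i).map D.mkQ) (C.map D.mkQ)
    (disjoint_sum_erase_of_disjoint_sum_Icc _ t hdisj) hB_erase' hB_sup'
  simp only [Nat.card_Icc, add_tsub_cancel_right, Nat.cast_add, Nat.cast_one,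
    ← Submodule.map_sum] at hquot
  calc eH ((∑ i ∈ Icc 1 (t + 1), B i) ⊔ N) ≤ eH ((∑ i ∈ Icc 1 (t + 1), B i) ⊔ D) :=
        eH_mono (sup_le_sup_left le_sup_left _)
    _ = eH D + eH ((∑ i ∈ Icc 1 (t + 1), B i).map D.mkQ) := eH_sup_eq_add_eH_map_mkQ _ _
    _ ≤ _ := by
      have hC := mul_le_mul_of_nonneg_left (eH_map_le D.mkQ C) (Nat.cast_nonneg (α := ℤ) t)
      have hJ := eH_sum_le (Icc 1 t) fun k =>
        (∑ j ∈ Icc 1 k, U j) ⊓ ((∑ j ∈ Icc (k + 1) (t + 1), U j) ⊔ N)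
      linarith [eH_sup_le N (∑ k ∈ Icc 1 t,
        (∑ j ∈ Icc 1 k, U j) ⊓ ((∑ j ∈ Icc (k + 1) (t + 1), U j) ⊔ N))]

theorem eH_sum_sup_add_mul_eH_inf_le (t M : ℕ) (htM : t + 1 ≤ M) (hchar : (t : F) = 0)
    (A B : ℕ → Submodule F V) (C : Submodule F V) :
    eH ((∑ i ∈ Icc 1 (t + 1), B i) ⊔ ∑ i ∈ Icc (t + 2) M, A i)
        + ((t : ℤ) + 1) * ((M : ℤ) - t - 1) * eH ((∑ j ∈ Icc 1 M, A j) ⊓ C) ≤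
      ((t : ℤ) + 2) * eH (∑ i ∈ Icc (t + 2) M, A i) + t * eH ((∑ j ∈ Icc 1 M, A j) ⊓ C)
      + ∑ k ∈ Icc 1 t, eH ((∑ j ∈ Icc 1 k, A j) ⊓ ∑ j ∈ Icc (k + 1) (t + 1), A j)
      + ((t : ℤ) + 1) * ∑ i ∈ Icc (t + 2) M, eH ((∑ j ∈ (Icc 1 M).erase i, A j) ⊓ C)
      + ∑ i ∈ Icc 1 (t + 1),
          ((eH (B i ⊔ ∑ j ∈ (Icc 1 M).erase i, A j) - eH (∑ j ∈ (Icc 1 M).erase i, A j))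
            + (eH (B i ⊔ (A i ⊔ C)) - eH (A i ⊔ C))) := by
  set S := ∑ j ∈ Icc 1 M, A j
  set N := ∑ i ∈ Icc (t + 2) M, A i
  set B' : ℕ → Submodule F V := fun i => B i ⊓ ((∑ j ∈ (Icc 1 M).erase i, A j) ⊓ (A i ⊔ C))
  have hB'_erase : ∀ i ∈ Icc 1 (t + 1), B' i ≤ (∑ j ∈ (Icc 1 (t + 1)).erase i, A j) ⊔ N :=
    fun i hi => inf_le_right.trans <| inf_le_left.trans
      (sum_Icc_erase_eq_add A (by omega) (mem_Icc.mp hi).2 htM).le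
  have hB'_sup : ∀ i ∈ Icc 1 (t + 1), B' i ≤ A i ⊔ S ⊓ C := fun i hi => by
    have hAS : A i ≤ S :=
      single_le_sum_of_canonicallyOrdered (by simp only [mem_Icc] at hi ⊢; omega)
    rw [inf_comm S, ← sup_inf_assoc_of_le C hAS]
    exact inf_le_right.trans
      (le_inf inf_le_right (inf_le_left.trans (sum_le_sum_of_subset (erase_subset _ _))))
  have hquot := eH_sum_sup_le_of_natCast_eq_zero hchar A B' N (S ⊓ C) hB'_erase hB'_sup
  have hreplace :=
    eH_sum_sup_add_sum_le (Icc 1 (t + 1)) (B' := B') (fun _ _ => inf_le_left) N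
  have htrunc := sum_le_sum fun i (_ : i ∈ Icc 1 (t + 1)) =>
    eH_sub_eH_inf_inf_le (B i) (∑ j ∈ (Icc 1 M).erase i, A j) (A i ⊔ C)
  rw [sum_sub_distrib] at htrunc
  have hsplit := sum_eH_inf_sup_le A N t
  have htransfer := sub_mul_eH_inf_add_eH_inf_le A C htM
  rw [show t + 1 + 1 = t + 2 from rfl, Nat.cast_add_one] at htransfer
  have hscaled := mul_le_mul_of_nonneg_left htransfer (by positivity : (0 : ℤ) ≤ t + 1)
  linarith [eH_nonneg ((∑ j ∈ Icc 1 (t + 1), A j) ⊓ N)]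

end Decomposition

theorem ineqA_of_char_dvd_general (n t M : ℕ) (hn : 7 ≤ n)
    (ht : t ≤ (n - 1) / 2 - 1) (hM : M = n - t - 2)
    (F V : Type*) [Field F] [AddCommGroup V] [Module F V]
    [FiniteDimensional F V] (hchar : ringChar F ∣ t)
    (A B : ℕ → Submodule F V) (C : Submodule F V) :
    IneqA t M A B C := by
  have htM : t + 1 ≤ M := by omega
  have hkey := eH_sum_sup_add_mul_eH_inf_le t M htM ((ringChar.spec F t).mpr hchar) A B C
  have hC : eH C = eH (C ⊔ ∑ j ∈ Icc 1 M, A j) - eH (∑ j ∈ Icc 1 M, A j)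
      + eH ((∑ j ∈ Icc 1 M, A j) ⊓ C) := by
    have hmod := eH_sup_add_eH_inf C (∑ j ∈ Icc 1 M, A j)
    rw [inf_comm] at hmod
    linarith
  have hCS := eH_mono (le_sup_right : ∑ j ∈ Icc 1 M, A j ≤ C ⊔ ∑ j ∈ Icc 1 M, A j)
  have hK : (t : ℤ) + 1 ≤ ((t : ℤ) + 2) * ((M : ℤ) - t) - 1 := by
    have : (t : ℤ) + 1 ≤ M := by exact_mod_cast htM
    nlinarith
  have hγ := mul_le_mul hK
    (sum_le_sum_of_subset_of_nonneg (Icc_subset_Icc (by omega : 1 ≤ t + 2) (le_refl M))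
      fun i _ _ => eH_nonneg ((∑ j ∈ (Icc 1 M).erase i, A j) ⊓ C))
    (sum_nonneg fun i _ => eH_nonneg _) ((by positivity : (0 : ℤ) ≤ t + 1).trans hK)
  have hPQ := sum_le_sum_of_subset_of_nonneg (Icc_subset_Icc (le_refl 1) (by omega : t ≤ t + 1))
    fun k _ _ => eH_nonneg ((∑ j ∈ Icc 1 k, A j) ⊓ ∑ j ∈ Icc (k + 1) (t + 1), A j)
  have hR := sum_nonneg fun i (_ : i ∈ Icc 1 (t + 1)) =>
    eH_nonneg ((∑ j ∈ Icc 1 (i - 1), A j) ⊓ A i)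
  have hN := mul_le_mul_of_nonneg_left (eH_sum_le (Icc (t + 2) M) A)
    (by positivity : (0 : ℤ) ≤ t + 2)
  unfold IneqA lhsA rhsA
  rw [hC]
  simp only [Submodule.add_eq_sup, sum_add_distrib] at hkey ⊢
  linarith [mul_nonneg (Nat.cast_nonneg (α := ℤ) t) (sub_nonneg.mpr hCS)]

/-- Characteristic-dependent linear rank inequality (a): for `n ≥ 7`,
`2 ≤ t ≤ ⌊(n−1)/2⌋ − 1`, `M = n − t − 2`, over a finite field whose
characteristic divides `t`, inequality (a) holds for all subspaces
`A_1,…,A_M, B_1,…,B_{t+1}, C`. -/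
theorem ineqA_of_char_dvd (n t M : ℕ) (hn : 7 ≤ n) (ht2 : 2 ≤ t)
    (ht : t ≤ (n - 1) / 2 - 1) (hM : M = n - t - 2)
    (F V : Type*) [Field F] [Fintype F] [AddCommGroup V] [Module F V]
    [FiniteDimensional F V] (hchar : ringChar F ∣ t)
    (A B : ℕ → Submodule F V) (C : Submodule F V) :
    IneqA t M A B C :=
  ineqA_of_char_dvd_general n t M hn ht hM F V hchar A B C
end

section
/- Let n ≥ 7, let t be an integer with 2 ≤ t ≤ ⌊(n−1)/2⌋ − 1, set M := n − t − 2, and let F be a field. Let D be the M×M matrix over F whose i-th column equals c − e_i for 1 ≤ i ≤ t+1 and equals e_i for t+2 ≤ i ≤ M, where e_1,…,e_M is the standard basis of F^M and c = e_1 + ⋯ + e_M. Then the rank of D equals M if the characteristic of F does not divide t, and equals M − 1 if the characteristic of F divides t. -/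
/-- Rank of the guiding matrix `D = D^t_{M(n,t)}`: its `i`-th column is `c − e_i`
for `1 ≤ i ≤ t+1` and `e_i` for `t+2 ≤ i ≤ M` (columns indexed by `Fin M`,
`0`-based).  The rank is `M` when the characteristic of `F` does not divide `t`,
and `M − 1` when it does. -/
theorem rank_guiding_matrix (n t M : ℕ) (hn : 7 ≤ n) (ht2 : 2 ≤ t)
    (ht : t ≤ (n - 1) / 2 - 1) (hM : M = n - t - 2)
    (F : Type*) [Field F]
    (D : Matrix (Fin M) (Fin M) F)
    (hD : ∀ j i : Fin M, D j i =
      if (i : ℕ) < t + 1 then (if j = i then 0 else 1) else (if j = i then 1 else 0)) :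
    (¬ ringChar F ∣ t → D.rank = M) ∧ (ringChar F ∣ t → D.rank = M - 1) := by
  have htM : t + 1 ≤ M := by omega
  have hM1 : 0 < M := by omega
  set P : Finset (Fin M) := Finset.univ.filter (fun i : Fin M => (i : ℕ) < t + 1) with hP
  have hmemP : ∀ i : Fin M, i ∈ P ↔ (i : ℕ) < t + 1 := by
    intro i; simp [hP]
  have hcard : P.card = t + 1 := by
    have : P = Finset.map (Fin.castLEEmb htM) Finset.univ := by
      ext j
      simp only [hmemP, Finset.mem_map, Finset.mem_univ, true_and]
      constructor
      · intro h
        exact ⟨⟨(j : ℕ), h⟩, by ext; simp [Fin.castLEEmb, Fin.castLE]⟩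
      · rintro ⟨a, rfl⟩
        simpa [Fin.castLEEmb, Fin.castLE] using a.isLt
    rw [this, Finset.card_map, Finset.card_univ, Fintype.card_fin]
  set S : (Fin M → F) → F := fun x => ∑ i ∈ P, x i with hS
  have key : ∀ (x : Fin M → F) (j : Fin M),
      D.mulVec x j = if (j : ℕ) < t + 1 then S x - x j else S x + x j := by
    intro x j
    have hmv : D.mulVec x j = ∑ i, D j i * x i := rfl
    rw [hmv, ← Finset.sum_filter_add_sum_filter_not Finset.univ
      (fun i : Fin M => (i : ℕ) < t + 1) (fun i => D j i * x i)]
    have h1 : ∑ i ∈ P, D j i * x i = S x - (if (j : ℕ) < t + 1 then x j else 0) := by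
      have hc : ∀ i ∈ P, D j i * x i = x i - (if j = i then x i else 0) := by
        intro i hi
        rw [hmemP] at hi
        rw [hD, if_pos hi]
        by_cases h : j = i <;> simp [h]
      rw [Finset.sum_congr rfl hc, Finset.sum_sub_distrib, Finset.sum_ite_eq]
      simp only [hS, hmemP]
    have h2 : ∑ i ∈ Finset.univ.filter (fun i : Fin M => ¬ (i : ℕ) < t + 1), D j i * x i
        = (if (j : ℕ) < t + 1 then 0 else x j) := by
      have hc : ∀ i ∈ Finset.univ.filter (fun i : Fin M => ¬ (i : ℕ) < t + 1),
          D j i * x i = (if j = i then x i else 0) := by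
        intro i hi
        simp only [Finset.mem_filter, Finset.mem_univ, true_and] at hi
        rw [hD, if_neg hi]
        by_cases h : j = i <;> simp [h]
      rw [Finset.sum_congr rfl hc, Finset.sum_ite_eq]
      simp only [Finset.mem_filter, Finset.mem_univ, true_and]
      by_cases h : (j : ℕ) < t + 1 <;> simp [h]
    rw [h1, h2]
    by_cases h : (j : ℕ) < t + 1 <;> simp [h]
  have hrn := LinearMap.finrank_range_add_finrank_ker D.mulVecLin
  rw [Module.finrank_fin_fun] at hrn
  have hrank : D.rank = Module.finrank F (LinearMap.range D.mulVecLin) := rfl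
  constructor
  · intro hchar
    have ht0 : (t : F) ≠ 0 := fun h => hchar ((ringChar.spec F t).mp h)
    have hker : LinearMap.ker D.mulVecLin = ⊥ := by
      rw [LinearMap.ker_eq_bot']
      intro x hx
      have hx' : ∀ j, D.mulVec x j = 0 := fun j => congrFun hx j
      have hSx : S x = 0 := by
        have hsum : ∑ j ∈ P, D.mulVec x j = 0 := by simp [hx']
        have heq : ∑ j ∈ P, D.mulVec x j = (t + 1 : ℕ) • S x - S x := by
          calc ∑ j ∈ P, D.mulVec x j = ∑ j ∈ P, (S x - x j) := by
                refine Finset.sum_congr rfl fun j hj => ?_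
                rw [key, if_pos ((hmemP j).mp hj)]
            _ = (t + 1 : ℕ) • S x - S x := by
                rw [Finset.sum_sub_distrib, Finset.sum_const, hcard]
        rw [heq] at hsum
        have : (t : F) * S x = 0 := by
          rw [nsmul_eq_mul] at hsum
          push_cast at hsum ⊢
          linear_combination hsum
        exact (mul_eq_zero.mp this).resolve_left ht0
      funext j
      have hj := hx' j
      rw [key] at hj
      by_cases h : (j : ℕ) < t + 1
      · rw [if_pos h, hSx] at hj; simpa using hj.symm
      · rw [if_neg h, hSx, zero_add] at hj; simpa using hj
    rw [hker, finrank_bot, add_zero] at hrn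
    rw [hrank, hrn]
  · intro hchar
    have ht0 : (t : F) = 0 := (ringChar.spec F t).mpr hchar
    set v : Fin M → F := fun j => if (j : ℕ) < t + 1 then 1 else -1 with hv
    have hSv : S v = t + 1 := by
      have : ∀ i ∈ P, v i = 1 := fun i hi => by
        rw [hv]; simp [(hmemP i).mp hi]
      simp only [hS]
      rw [Finset.sum_congr rfl this, Finset.sum_const, hcard, nsmul_eq_mul]
      push_cast; ring
    have hvker : D.mulVecLin v = 0 := by
      funext j
      have := key v j
      rw [hv] at this ⊢
      show D.mulVec _ j = 0
      rw [this]
      by_cases h : (j : ℕ) < t + 1 <;>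
        simp only [h, if_pos, if_neg, if_true, if_false] <;>
        rw [show S (fun j : Fin M => if (j : ℕ) < t + 1 then (1:F) else -1) = t + 1 from hSv] <;>
        [skip; skip] <;> rw [ht0] <;> ring
    have hvne : v ≠ 0 := by
      intro h
      have := congrFun h ⟨0, hM1⟩
      rw [hv] at this
      simp only [Pi.zero_apply] at this
      rw [if_pos (by omega : (0 : ℕ) < t + 1)] at this
      exact one_ne_zero this
    have hker : LinearMap.ker D.mulVecLin = Submodule.span F {v} := by
      apply le_antisymm
      · intro x hx
        rw [LinearMap.mem_ker] at hx
        have hx' : ∀ j, D.mulVec x j = 0 := fun j => congrFun hx j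
        have hxv : x = S x • v := by
          funext j
          have hj := hx' j
          rw [key] at hj
          rw [hv]
          by_cases h : (j : ℕ) < t + 1
          · rw [if_pos h] at hj
            simp only [Pi.smul_apply, h, if_true, smul_eq_mul, mul_one]
            linear_combination -hj
          · rw [if_neg h] at hj
            simp only [Pi.smul_apply, h, if_false, smul_eq_mul, mul_neg, mul_one]
            linear_combination hj
        rw [hxv]
        exact Submodule.smul_mem _ _ (Submodule.mem_span_singleton_self v)
      · rw [Submodule.span_le, Set.singleton_subset_iff]
        exact hvker
    rw [hker, finrank_span_singleton hvne] at hrn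
    rw [hrank]
    omega
end

section
/- Let V be a finite-dimensional vector space over a field F, let A_1,…,A_n be subspaces with V = A_1 ⊕ ⋯ ⊕ A_n, and let C be a subspace of V such that C ∩ (Σ_{i≠k} A_i) = 0 for every k ∈ {1,…,n}. Let S_1,…,S_m be nonempty subsets of {1,…,n} and suppose the n×m matrix over F whose (j,i) entry is 1 if j ∈ S_i and 0 otherwise has rank m. Then dim( π_{S_1}(C) + ⋯ + π_{S_m}(C) ) = m · dim C. -/
open Finset

private lemma aux_le_sum {R M ι : Type*} [Semiring R] [AddCommMonoid M] [Module R M]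
    [DecidableEq ι] (A : ι → Submodule R M) (s : Finset ι) {i : ι} (hi : i ∈ s) :
    A i ≤ ∑ k ∈ s, A k := by
  rw [← Finset.insert_erase hi, Finset.sum_insert (Finset.notMem_erase _ _),
    Submodule.add_eq_sup]
  exact le_sup_left

private lemma aux_sum_le {R M ι : Type*} [Semiring R] [AddCommMonoid M] [Module R M]
    (A : ι → Submodule R M) (s : Finset ι) (Q : Submodule R M)
    (h : ∀ i ∈ s, A i ≤ Q) : ∑ k ∈ s, A k ≤ Q := by
  classical
  revert h
  induction s using Finset.cons_induction with
  | empty => simp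
  | cons a s ha ih =>
    intro h
    rw [Finset.sum_cons, Submodule.add_eq_sup]
    exact sup_le (h a (Finset.mem_cons_self _ _))
      (ih fun i hi => h i (Finset.mem_cons_of_mem hi))

/-- Claim 1 of the paper, full-rank case: suppose `V = A_1 ⊕ ⋯ ⊕ A_n`,
`C ∩ (Σ_{i≠k} A_i) = 0` for every `k`, the sets `S_1,…,S_m ⊆ {1,…,n}` are
nonempty, the associated `n×m` 0/1 matrix over `F` has rank `m`, and `π i` is
the canonical projection onto `⊕_{j∈S_i} A_j` along `⊕_{j∉S_i} A_j`.  Then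
`dim(π_{S_1}(C) + ⋯ + π_{S_m}(C)) = m·dim C`. -/
theorem dim_sum_proj_of_rank_eq (F V : Type*) [Field F] [AddCommGroup V] [Module F V]
    [FiniteDimensional F V] (n m : ℕ) (A : Fin n → Submodule F V)
    (hA : DirectSum.IsInternal A)
    (C : Submodule F V) (hC : ∀ k, C ⊓ (∑ i ∈ univ.erase k, A i) = ⊥)
    (S : Fin m → Finset (Fin n)) (hS : ∀ i, (S i).Nonempty)
    (hrank : (Matrix.of fun (j : Fin n) (i : Fin m) =>
      if j ∈ S i then (1 : F) else 0).rank = m)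
    (π : Fin m → (V →ₗ[F] V))
    (hπ1 : ∀ i, ∀ j ∈ S i, ∀ v ∈ A j, π i v = v)
    (hπ2 : ∀ i, ∀ j ∉ S i, ∀ v ∈ A j, π i v = 0) :
    Module.finrank F (∑ i : Fin m, Submodule.map (π i) C : Submodule F V)
      = m * Module.finrank F C := by
  classical
  set M : Matrix (Fin n) (Fin m) F :=
    Matrix.of fun (j : Fin n) (i : Fin m) => if j ∈ S i then (1 : F) else 0 with hMdef
  set e := LinearEquiv.ofBijective (DirectSum.coeLinearMap A) hA with he
  -- component projections
  set p : Fin n → (V →ₗ[F] V) := fun j =>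
    (A j).subtype ∘ₗ (DirectSum.component F (Fin n) (fun i => ↥(A i)) j)
      ∘ₗ e.symm.toLinearMap with hpdef
  have hp_apply : ∀ j v, p j v = ((e.symm v) j : V) := fun j v => rfl
  have hp_mem : ∀ j v, p j v ∈ A j := fun j v => (e.symm v j).2
  have hp_same : ∀ j v, v ∈ A j → p j v = v := fun j v hv => by
    rw [hp_apply, hA.ofBijective_coeLinearMap_of_mem hv]
  have hp_ne : ∀ i j, i ≠ j → ∀ v ∈ A i, p j v = 0 := fun i j hij v hv => by
    rw [hp_apply, hA.ofBijective_coeLinearMap_of_mem_ne hij hv, Submodule.coe_zero]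
  have hp_sum : ∀ v, ∑ j, p j v = v := fun v => by
    conv_rhs => rw [← e.apply_symm_apply v, ← DirectSum.sum_univ_of (e.symm v), map_sum]
    refine Finset.sum_congr rfl fun j _ => ?_
    rw [hp_apply]
    exact (DirectSum.coeLinearMap_of A j _).symm
  -- injectivity of components on C
  have hCinj : ∀ j, ∀ c ∈ C, p j c = 0 → c = 0 := by
    intro j c hc h0
    have hmem : c ∈ ∑ i ∈ univ.erase j, A i := by
      have hcs : ∑ i ∈ univ.erase j, p i c = c := by
        rw [Finset.sum_erase (f := fun i => p i c) univ h0, hp_sum]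
      rw [← hcs]
      exact Submodule.sum_mem _ fun i hi =>
        aux_le_sum A (univ.erase j) hi (hp_mem i c)
    have : c ∈ C ⊓ (∑ i ∈ univ.erase j, A i) := ⟨hc, hmem⟩
    rw [hC j] at this
    exact this
  -- projections in terms of components
  have hπp : ∀ i v, π i v = ∑ k ∈ S i, p k v := by
    intro i v
    conv_lhs => rw [← hp_sum v, map_sum]
    have : ∀ k : Fin n, π i (p k v) = if k ∈ S i then p k v else 0 := by
      intro k
      by_cases hk : k ∈ S i
      · rw [if_pos hk, hπ1 i k hk _ (hp_mem k v)]
      · rw [if_neg hk, hπ2 i k hk _ (hp_mem k v)]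
    rw [Finset.sum_congr rfl fun k _ => this k, Finset.sum_ite_mem, Finset.univ_inter]
  have hpπ : ∀ i j v, p j (π i v) = if j ∈ S i then p j v else 0 := by
    intro i j v
    rw [hπp, map_sum]
    have hterm : ∀ k ∈ S i, p j (p k v) = if k = j then p j v else 0 := by
      intro k _
      by_cases hk : k = j
      · subst hk; rw [if_pos rfl, hp_same k _ (hp_mem k v)]
      · rw [if_neg hk, hp_ne k j hk _ (hp_mem k v)]
    rw [Finset.sum_congr rfl hterm, Finset.sum_ite_eq' (S i) j fun _ => p j v]
  -- left inverse of the matrix M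
  have hinj : LinearMap.ker M.mulVecLin = ⊥ := by
    have h1 := LinearMap.finrank_range_add_finrank_ker M.mulVecLin
    have h2 : Module.finrank F (LinearMap.range M.mulVecLin) = m := hrank
    rw [h2, Module.finrank_pi, Fintype.card_fin] at h1
    have h3 : Module.finrank F (LinearMap.ker M.mulVecLin) = 0 := by omega
    exact (Submodule.finrank_eq_zero).mp h3
  obtain ⟨g, hg⟩ := LinearMap.exists_leftInverse_of_injective M.mulVecLin hinj
  set N : Matrix (Fin m) (Fin n) F := LinearMap.toMatrix' g with hNdef
  have hNM : N * M = 1 := by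
    have : LinearMap.toMatrix' (g.comp M.mulVecLin) = LinearMap.toMatrix' g * M := by
      rw [← Matrix.toLin'_apply' M, LinearMap.toMatrix'_comp, LinearMap.toMatrix'_toLin']
    rw [hNdef, ← this, hg, LinearMap.toMatrix'_id]
  -- key injectivity: if ∑ π i (c i) = 0 with c i ∈ C then all c i = 0
  have hkey : ∀ c : Fin m → V, (∀ i, c i ∈ C) → (∑ i, π i (c i)) = 0 → ∀ i, c i = 0 := by
    intro c hc hsum
    have hd : ∀ j : Fin n, (∑ i, M j i • c i) = 0 := by
      intro j
      have h0 : p j (∑ i, π i (c i)) = 0 := by rw [hsum, map_zero]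
      rw [map_sum] at h0
      have hterm : ∀ i : Fin m, p j (π i (c i)) = M j i • (p j (c i)) := by
        intro i
        rw [hpπ, hMdef]
        by_cases hj : j ∈ S i
        · simp [hj]
        · simp [hj]
      rw [Finset.sum_congr rfl fun i _ => hterm i] at h0
      have h0' : p j (∑ i, M j i • c i) = 0 := by
        rw [map_sum]
        simpa [map_smul] using h0
      exact hCinj j _ (Submodule.sum_mem C fun i _ => Submodule.smul_mem C _ (hc i)) h0'
    intro k
    have : c k = ∑ j, N k j • (∑ i, M j i • c i) := by
      have h1 : ∑ j, N k j • (∑ i : Fin m, M j i • c i)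
          = ∑ i : Fin m, ((N * M) k i) • c i := by
        rw [Finset.sum_congr rfl fun j (_ : j ∈ univ) => Finset.smul_sum
          (r := N k j) (f := fun i => M j i • c i) (s := univ), Finset.sum_comm]
        refine Finset.sum_congr rfl fun i _ => ?_
        rw [Matrix.mul_apply, Finset.sum_smul]
        exact Finset.sum_congr rfl fun j _ => by rw [smul_smul]
      rw [h1, hNM]
      simp [Matrix.one_apply]
    rw [this]
    simp only [hd, smul_zero, Finset.sum_const_zero]
  -- the big map
  set Φ : (Fin m → ↥C) →ₗ[F] V :=
    ∑ i : Fin m, (π i) ∘ₗ C.subtype ∘ₗ LinearMap.proj i with hΦdef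
  have hΦ_apply : ∀ x : Fin m → ↥C, Φ x = ∑ i, π i (x i) := fun x => by
    rw [hΦdef, LinearMap.sum_apply]
    rfl
  have hrange : LinearMap.range Φ = ∑ i : Fin m, Submodule.map (π i) C := by
    apply le_antisymm
    · rintro _ ⟨x, rfl⟩
      rw [hΦ_apply]
      exact Submodule.sum_mem _ fun i _ =>
        aux_le_sum (fun i => Submodule.map (π i) C) univ (Finset.mem_univ i)
          ⟨x i, (x i).2, rfl⟩
    · refine aux_sum_le _ _ _ fun i _ => ?_
      rintro _ ⟨c, hc, rfl⟩
      refine ⟨Pi.single i ⟨c, hc⟩, ?_⟩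
      rw [hΦ_apply]
      rw [Finset.sum_eq_single i]
      · simp
      · intro b _ hb
        simp [Pi.single_eq_of_ne hb]
      · simp
  have hker : LinearMap.ker Φ = ⊥ := by
    rw [LinearMap.ker_eq_bot']
    intro x hx
    rw [hΦ_apply] at hx
    have := hkey (fun i => (x i : V)) (fun i => (x i).2) hx
    funext i
    exact Subtype.ext (this i)
  have hfr := LinearMap.finrank_range_add_finrank_ker Φ
  rw [hrange, hker, finrank_bot, add_zero] at hfr
  rw [hfr, Module.finrank_pi_fintype, Finset.sum_const, Finset.card_univ,
    Fintype.card_fin, smul_eq_mul]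
end

section
/- Let V be a finite-dimensional vector space over a field F, let A_1,…,A_n be subspaces with V = A_1 ⊕ ⋯ ⊕ A_n, and let C be a subspace of V such that C ∩ (Σ_{i≠k} A_i) = 0 for every k ∈ {1,…,n}. Let S_1,…,S_m be nonempty subsets of {1,…,n} and suppose the n×m matrix over F whose (j,i) entry is 1 if j ∈ S_i and 0 otherwise has rank m − 1. Then dim( π_{S_1}(C) + ⋯ + π_{S_m}(C) ) = (m − 1) · dim C. -/
open Finset

/-!
Let `Φ : C^m → V` send `(c_i)` to `∑ i, π_{S_i} c_i`, so that its range is the subspace in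
question. Writing `p_j` for the projection onto `A_j` and `M` for the incidence matrix,
`π_{S_i} = ∑ j, M j i • p_j`, hence `Φ c = ∑ j, p_j ((M ⊗ id_C) c)_j`. The summands lie in the
independent `A_j`, and `p_j` is injective on `C` because `C ⊓ ∑_{i ≠ j} A_i = ⊥`; so
`ker Φ = ker (M ⊗ id_C) ≅ ker M ⊗ C`, of dimension `(m - rank M) · dim C = dim C`.
Rank–nullity for `Φ` gives `(m - 1) · dim C`.
-/

namespace DirectSum.IsInternal

variable {R V ι : Type*} [Ring R] [AddCommGroup V] [Module R V] [DecidableEq ι]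
  {A : ι → Submodule R V} (hA : IsInternal A)

noncomputable def proj (j : ι) : V →ₗ[R] V :=
  (A j).subtype ∘ₗ component R ι (fun i => A i) j ∘ₗ
    (LinearEquiv.ofBijective (coeLinearMap A) hA).symm.toLinearMap

theorem proj_apply_mem (j : ι) (v : V) : hA.proj j v ∈ A j := SetLike.coe_mem _

theorem proj_apply_of_mem {j k : ι} {v : V} (hv : v ∈ A k) :
    hA.proj j v = if j = k then v else 0 := by
  simp only [proj, LinearMap.coe_comp, Function.comp_apply, LinearEquiv.coe_coe,
    Submodule.coe_subtype, ← apply_eq_component]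
  split_ifs with hjk
  · subst hjk
    rw [hA.ofBijective_coeLinearMap_of_mem hv]
  · rw [hA.ofBijective_coeLinearMap_of_mem_ne (Ne.symm hjk) hv]
    rfl

theorem proj_proj (j k : ι) (v : V) :
    hA.proj j (hA.proj k v) = if j = k then hA.proj k v else 0 :=
  hA.proj_apply_of_mem (hA.proj_apply_mem k v)

variable [Fintype ι]

theorem sum_proj_apply (v : V) : ∑ j, hA.proj j v = v := by
  set e := LinearEquiv.ofBijective (coeLinearMap A) hA
  calc ∑ j, hA.proj j v = coeLinearMap A (e.symm v) := by
        rw [← sum_univ_of (e.symm v), map_sum]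
        simp [proj, e, ← apply_eq_component]
    _ = v := e.apply_symm_apply v

theorem apply_eq_sum_smul_proj {f : V →ₗ[R] V} {c : ι → R}
    (hf : ∀ j, ∀ v ∈ A j, f v = c j • v) (v : V) : f v = ∑ j, c j • hA.proj j v := by
  conv_lhs => rw [← hA.sum_proj_apply v, map_sum]
  exact sum_congr rfl fun j _ => hf j _ (hA.proj_apply_mem j v)

theorem sum_proj_eq_zero_iff (x : ι → V) :
    ∑ j, hA.proj j (x j) = 0 ↔ ∀ j, hA.proj j (x j) = 0 := by
  refine ⟨fun h k => ?_, fun h => sum_eq_zero fun j _ => h j⟩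
  simpa [map_sum, hA.proj_proj] using congrArg (hA.proj k) h

theorem mem_sum_erase_of_proj_eq_zero {k : ι} {v : V} (hv : hA.proj k v = 0) :
    v ∈ ∑ i ∈ univ.erase k, A i := by
  rw [← hA.sum_proj_apply v, ← sum_erase (f := fun j => hA.proj j v) univ hv]
  exact Submodule.sum_mem _ fun j hj =>
    single_le_sum_of_canonicallyOrdered (f := A) hj (hA.proj_apply_mem j v)

theorem eq_zero_of_proj_eq_zero {C : Submodule R V} {k : ι}
    (hC : C ⊓ ∑ i ∈ univ.erase k, A i = ⊥) {v : V} (hvC : v ∈ C) (hv : hA.proj k v = 0) :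
    v = 0 := by
  rw [← Submodule.mem_bot R, ← hC]
  exact ⟨hvC, hA.mem_sum_erase_of_proj_eq_zero hv⟩

end DirectSum.IsInternal

namespace Matrix

variable {R ι κ : Type*} [CommSemiring R] [Fintype κ]

def mulVecLinModule (M : Matrix ι κ R) (W : Type*) [AddCommMonoid W] [Module R W] :
    (κ → W) →ₗ[R] (ι → W) :=
  LinearMap.pi fun j => ∑ i, M j i • LinearMap.proj i

@[simp]
theorem mulVecLinModule_apply (M : Matrix ι κ R) {W : Type*} [AddCommMonoid W] [Module R W]
    (c : κ → W) (j : ι) : M.mulVecLinModule W c j = ∑ i, M j i • c i := by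
  simp [mulVecLinModule]

theorem mulVecLinModule_comp_piScalarRight [Fintype ι] [DecidableEq ι] [DecidableEq κ]
    (M : Matrix ι κ R) (W : Type*) [AddCommMonoid W] [Module R W] :
    M.mulVecLinModule W ∘ₗ (TensorProduct.piScalarRight R R W κ).toLinearMap =
      (TensorProduct.piScalarRight R R W ι).toLinearMap ∘ₗ M.mulVecLin.lTensor W := by
  ext w v j
  simp [Pi.single_apply]

theorem rank_add_finrank_ker_mulVecLin {F : Type*} [Field F] (M : Matrix ι κ F) :
    M.rank + Module.finrank F (LinearMap.ker M.mulVecLin) = Fintype.card κ := by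
  rw [← Module.finrank_fintype_fun_eq_card (R := F)]
  exact M.mulVecLin.finrank_range_add_finrank_ker

theorem finrank_ker_mulVecLinModule {F : Type*} [Field F] [Fintype ι] (M : Matrix ι κ F)
    (W : Type*) [AddCommGroup W] [Module F W] :
    Module.finrank F (LinearMap.ker (M.mulVecLinModule W)) =
      Module.finrank F W * Module.finrank F (LinearMap.ker M.mulVecLin) := by
  classical
  set e := TensorProduct.piScalarRight F F W κ
  have hker : (LinearMap.ker (M.mulVecLinModule W)).comap e.toLinearMap =
      LinearMap.ker (TensorProduct.AlgebraTensorModule.lTensor F W M.mulVecLin) := by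
    rw [← LinearMap.ker_comp, mulVecLinModule_comp_piScalarRight, LinearEquiv.ker_comp]
    rfl
  rw [← LinearEquiv.finrank_map_eq e.symm, ← Submodule.comap_equiv_eq_map_symm, hker,
    ← (LinearMap.tensorKerEquiv F W M.mulVecLin).finrank_eq, Module.finrank_tensorProduct]

end Matrix

theorem LinearMap.range_lsum {R M ι : Type*} [CommSemiring R] [AddCommMonoid M] [Module R M]
    [Fintype ι] [DecidableEq ι] {φ : ι → Type*} [∀ i, AddCommMonoid (φ i)] [∀ i, Module R (φ i)]
    (f : ∀ i, φ i →ₗ[R] M) :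
    LinearMap.range (LinearMap.lsum R φ R f) = ∑ i, LinearMap.range (f i) := by
  refine le_antisymm ?_ (Finset.sup_le fun i _ => ?_)
  · rintro _ ⟨c, rfl⟩
    rw [LinearMap.lsum_apply, LinearMap.sum_apply]
    exact Submodule.sum_mem _ fun i hi =>
      single_le_sum_of_canonicallyOrdered (f := fun i => LinearMap.range (f i)) hi
        (LinearMap.mem_range_self (f i) (c i))
  · rintro _ ⟨x, rfl⟩
    exact ⟨Pi.single i x, by simp [LinearMap.apply_single]⟩

section

variable {F V ι κ : Type*} [Field F] [AddCommGroup V] [Module F V]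
  [Fintype ι] [DecidableEq ι] [Fintype κ] [DecidableEq κ]
  {A : ι → Submodule F V} (hA : DirectSum.IsInternal A)
  {C : Submodule F V} (hC : ∀ k, C ⊓ ∑ i ∈ univ.erase k, A i = ⊥)
  {M : Matrix ι κ F} {π : κ → V →ₗ[F] V} (hπ : ∀ i j, ∀ v ∈ A j, π i v = M j i • v)
include hA hC hπ

theorem ker_lsum_eq_ker_mulVecLinModule :
    LinearMap.ker (LinearMap.lsum F (fun _ => C) F fun i => π i ∘ₗ C.subtype) =
      LinearMap.ker (M.mulVecLinModule C) := by
  ext c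
  have hΦ : LinearMap.lsum F (fun _ => C) F (fun i => π i ∘ₗ C.subtype) c =
      ∑ j, hA.proj j (M.mulVecLinModule C c j) := by
    simp only [LinearMap.lsum_apply, LinearMap.sum_apply, LinearMap.comp_apply,
      LinearMap.proj_apply, Submodule.subtype_apply, hA.apply_eq_sum_smul_proj (hπ _),
      Matrix.mulVecLinModule_apply, Submodule.coe_sum, Submodule.coe_smul, map_sum, map_smul]
    exact sum_comm
  simp only [LinearMap.mem_ker, hΦ, hA.sum_proj_eq_zero_iff, funext_iff, Pi.zero_apply]
  refine forall_congr' fun j => ⟨fun h => ?_, fun h => by simp [h]⟩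
  exact Subtype.ext (hA.eq_zero_of_proj_eq_zero (hC j) (SetLike.coe_mem _) h)

theorem finrank_sum_map_add_finrank_ker_mul_finrank [FiniteDimensional F V] :
    Module.finrank F (∑ i, C.map (π i) : Submodule F V) +
        Module.finrank F (LinearMap.ker M.mulVecLin) * Module.finrank F C =
      Fintype.card κ * Module.finrank F C := by
  set Φ := LinearMap.lsum F (fun _ => C) F fun i => π i ∘ₗ C.subtype
  have hrange : LinearMap.range Φ = ∑ i, C.map (π i) := by
    rw [LinearMap.range_lsum]
    exact sum_congr rfl fun i _ => by rw [LinearMap.range_comp, Submodule.range_subtype]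
  have := Φ.finrank_range_add_finrank_ker
  rwa [hrange, ker_lsum_eq_ker_mulVecLinModule hA hC hπ, Matrix.finrank_ker_mulVecLinModule,
    Module.finrank_pi_fintype, sum_const, card_univ, smul_eq_mul,
    mul_comm (Module.finrank F C)] at this

end

theorem dim_sum_proj_of_rank_eq_sub_one_general (F V : Type*) [Field F] [AddCommGroup V] [Module F V]
    [FiniteDimensional F V] (n m : ℕ) (A : Fin n → Submodule F V)
    (hA : DirectSum.IsInternal A)
    (C : Submodule F V) (hC : ∀ k, C ⊓ (∑ i ∈ univ.erase k, A i) = ⊥)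
    (S : Fin m → Finset (Fin n))
    (hrank : (Matrix.of fun (j : Fin n) (i : Fin m) =>
      if j ∈ S i then (1 : F) else 0).rank = m - 1)
    (π : Fin m → (V →ₗ[F] V))
    (hπ1 : ∀ i, ∀ j ∈ S i, ∀ v ∈ A j, π i v = v)
    (hπ2 : ∀ i, ∀ j ∉ S i, ∀ v ∈ A j, π i v = 0) :
    Module.finrank F (∑ i : Fin m, Submodule.map (π i) C : Submodule F V)
      = (m - 1) * Module.finrank F C := by
  set M : Matrix (Fin n) (Fin m) F := Matrix.of fun j i => if j ∈ S i then 1 else 0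
  have hπM (i : Fin m) (j : Fin n) (v : V) (hv : v ∈ A j) : π i v = M j i • v := by
    by_cases hj : j ∈ S i
    · simp [M, hj, hπ1 i j hj v hv]
    · simp [M, hj, hπ2 i j hj v hv]
  have hker : Module.finrank F (LinearMap.ker M.mulVecLin) = m - (m - 1) := by
    have := M.rank_add_finrank_ker_mulVecLin
    rw [Fintype.card_fin] at this
    omega
  have key := finrank_sum_map_add_finrank_ker_mul_finrank hA hC hπM
  rw [hker, Fintype.card_fin] at key
  calc _ = (m - (m - (m - 1))) * Module.finrank F C := by rw [Nat.sub_mul]; omega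
    _ = (m - 1) * Module.finrank F C := by rw [Nat.sub_sub_self (Nat.sub_le m 1)]

/-- Claim 1 of the paper, rank `m − 1` case: suppose `V = A_1 ⊕ ⋯ ⊕ A_n`,
`C ∩ (Σ_{i≠k} A_i) = 0` for every `k`, the sets `S_1,…,S_m ⊆ {1,…,n}` are
nonempty, the associated `n×m` 0/1 matrix over `F` has rank `m − 1`, and `π i` is
the canonical projection onto `⊕_{j∈S_i} A_j` along `⊕_{j∉S_i} A_j`.  Then
`dim(π_{S_1}(C) + ⋯ + π_{S_m}(C)) = (m−1)·dim C`. -/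
theorem dim_sum_proj_of_rank_eq_sub_one (F V : Type*) [Field F] [AddCommGroup V] [Module F V]
    [FiniteDimensional F V] (n m : ℕ) (A : Fin n → Submodule F V)
    (hA : DirectSum.IsInternal A)
    (C : Submodule F V) (hC : ∀ k, C ⊓ (∑ i ∈ univ.erase k, A i) = ⊥)
    (S : Fin m → Finset (Fin n)) (hS : ∀ i, (S i).Nonempty)
    (hrank : (Matrix.of fun (j : Fin n) (i : Fin m) =>
      if j ∈ S i then (1 : F) else 0).rank = m - 1)
    (π : Fin m → (V →ₗ[F] V))
    (hπ1 : ∀ i, ∀ j ∈ S i, ∀ v ∈ A j, π i v = v)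
    (hπ2 : ∀ i, ∀ j ∉ S i, ∀ v ∈ A j, π i v = 0) :
    Module.finrank F (∑ i : Fin m, Submodule.map (π i) C : Submodule F V)
      = (m - 1) * Module.finrank F C :=
  dim_sum_proj_of_rank_eq_sub_one_general F V n m A hA C hC S hrank π hπ1 hπ2
end

section
/- Let n ≥ 7 and let t be an integer with 2 ≤ t ≤ ⌊(n−1)/2⌋ − 1, and set M := n − t − 2. Let p be a prime not dividing t, let F = GF(p) and V = F^M with standard basis e_1,…,e_M and c := e_1 + ⋯ + e_M. Define the subspaces A_i := span{e_i} for 1 ≤ i ≤ M, B_i := span{c − e_i} for 1 ≤ i ≤ t+1, and C := span{c}. Then inequality (a) fails for these subspaces; in fact its left-hand side exceeds its right-hand side by exactly 1. -/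
/-!
On the right-hand side every intersection and conditional term vanishes: the `A_i` are the
coordinate axes, and `B_i` lies both in the hyperplane `∑_{j ≠ i} A_j` and in `A_i + C`.
What remains is `M - 1 + (t + 2)(M - t - 1)`. On the left,
`∑_{i ≤ t+1} (c - e_i) - ∑_{i ≥ t+2} e_i = t • c`, so when `p ∤ t` the spaces `B_1, …, B_{t+1}`,
`A_{t+2}, …, A_M` contain `c`, hence every `e_i`, and span `V`: the left-hand side is
`M + (t + 2)(M - t - 1)`.
-/

open Finset

variable {F V : Type*} [Field F] [AddCommGroup V] [Module F V]

lemma Submodule.finsetSum_le {R W ι : Type*} [Semiring R] [AddCommMonoid W] [Module R W]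
    {s : Finset ι} {f : ι → Submodule R W} {K : Submodule R W} (h : ∀ i ∈ s, f i ≤ K) :
    ∑ i ∈ s, f i ≤ K :=
  Finset.sum_induction f (· ≤ K) (fun _ _ => sup_le) bot_le h

lemma Submodule.le_finsetSum {R W ι : Type*} [Semiring R] [AddCommMonoid W] [Module R W]
    {s : Finset ι} (f : ι → Submodule R W) {i : ι} (hi : i ∈ s) : f i ≤ ∑ j ∈ s, f j :=
  Finset.single_le_sum (fun _ _ => bot_le) hi

/-- The standard basis vector `e_i` of `K^M`, indexed from `1` as in the paper;
it is `0` unless `1 ≤ i ≤ M`. -/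
def unitVec (K : Type*) [Zero K] [One K] (M i : ℕ) : Fin M → K :=
  fun j => if (j : ℕ) + 1 = i then 1 else 0

open Submodule

section Semiring

variable (K : Type*) [Semiring K] (M : ℕ)

def coordLine (i : ℕ) : Submodule K (Fin M → K) := span K {unitVec K M i}

def diagLine : Submodule K (Fin M → K) := span K {1}

variable {K M}

lemma unitVec_succ (k : Fin M) : unitVec K M (k + 1) = Pi.single k 1 := by
  funext j
  simp [unitVec, Pi.single_apply, Fin.val_inj]

lemma unitVec_ne_zero [Nontrivial K] {i : ℕ} (hi : i ∈ Icc 1 M) : unitVec K M i ≠ 0 := by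
  rw [mem_Icc] at hi
  intro h
  have := congrFun h ⟨i - 1, by omega⟩
  simp [unitVec, show i - 1 + 1 = i by omega] at this

lemma sum_unitVec_apply (s : Finset ℕ) (k : Fin M) :
    (∑ i ∈ s, unitVec K M i) k = if (k : ℕ) + 1 ∈ s then 1 else 0 := by
  simp only [Finset.sum_apply, unitVec, Finset.sum_ite_eq]

lemma sum_unitVec_Icc : ∑ i ∈ Icc 1 M, unitVec K M i = 1 := by
  funext k
  rw [sum_unitVec_apply, if_pos (by simp)]
  rfl

lemma unitVec_mem_sum_coordLine {s : Finset ℕ} {i : ℕ} (hi : i ∈ s) :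
    unitVec K M i ∈ ∑ j ∈ s, coordLine K M j :=
  le_finsetSum _ hi (mem_span_singleton_self _)

lemma apply_eq_zero_of_mem_sum_coordLine {s : Finset ℕ} {x : Fin M → K}
    (hx : x ∈ ∑ i ∈ s, coordLine K M i) {k : Fin M} (hk : (k : ℕ) + 1 ∉ s) : x k = 0 := by
  have : ∑ i ∈ s, coordLine K M i ≤ LinearMap.ker (LinearMap.proj k) :=
    finsetSum_le fun i hi => span_le.mpr <| Set.singleton_subset_iff.mpr <| by
      simp [unitVec, show (k : ℕ) + 1 ≠ i from fun h => hk (h ▸ hi)]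
  exact this hx

lemma sum_coordLine_inf_eq_bot {s u : Finset ℕ} (h : Disjoint s u) :
    (∑ i ∈ s, coordLine K M i) ⊓ (∑ i ∈ u, coordLine K M i) = ⊥ := by
  refine eq_bot_iff.mpr fun x hx => (mem_bot K).mpr <| funext fun k => ?_
  by_cases hk : (k : ℕ) + 1 ∈ s
  · exact apply_eq_zero_of_mem_sum_coordLine hx.2 (disjoint_left.mp h hk)
  · exact apply_eq_zero_of_mem_sum_coordLine hx.1 hk

lemma sum_coordLine_erase_inf_diagLine {i : ℕ} (hi : i ∈ Icc 1 M) :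
    (∑ j ∈ (Icc 1 M).erase i, coordLine K M j) ⊓ diagLine K M = ⊥ := by
  rw [mem_Icc] at hi
  refine eq_bot_iff.mpr fun x ⟨hxA, hxC⟩ => ?_
  obtain ⟨a, rfl⟩ := mem_span_singleton.mp hxC
  have : (a • 1 : Fin M → K) ⟨i - 1, by omega⟩ = 0 :=
    apply_eq_zero_of_mem_sum_coordLine hxA (by simp [show i - 1 + 1 = i by omega])
  simp_all

lemma eq_top_of_unitVec_mem {T : Submodule K (Fin M → K)}
    (h : ∀ i ∈ Icc 1 M, unitVec K M i ∈ T) : T = ⊤ := by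
  refine eq_top_iff.mpr fun v _ => ?_
  rw [← Finset.univ_sum_single v]
  refine sum_mem fun k _ => ?_
  have hk := h (k + 1) (by simp)
  rw [unitVec_succ] at hk
  simpa [← Pi.single_smul'] using T.smul_mem (v k) hk

lemma sum_coordLine_Icc : ∑ i ∈ Icc 1 M, coordLine K M i = ⊤ :=
  eq_top_of_unitVec_mem fun _ => unitVec_mem_sum_coordLine

end Semiring

section Ring

variable {K : Type*} [Ring K] {M : ℕ}

variable (K M) in
def diagSubCoordLine (i : ℕ) : Submodule K (Fin M → K) := span K {1 - unitVec K M i}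

lemma diagSubCoordLine_le_sum_erase {i : ℕ} (hi : i ∈ Icc 1 M) :
    diagSubCoordLine K M i ≤ ∑ j ∈ (Icc 1 M).erase i, coordLine K M j := by
  rw [diagSubCoordLine, span_le, Set.singleton_subset_iff, SetLike.mem_coe,
    ← sum_unitVec_Icc, ← Finset.sum_erase_add _ _ hi, add_sub_cancel_right]
  exact sum_mem fun _ => unitVec_mem_sum_coordLine

lemma diagSubCoordLine_le_coordLine_sup_diagLine (i : ℕ) :
    diagSubCoordLine K M i ≤ coordLine K M i ⊔ diagLine K M := by
  rw [diagSubCoordLine, span_le, Set.singleton_subset_iff]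
  exact sub_mem (mem_sup_right (mem_span_singleton_self _))
    (mem_sup_left (mem_span_singleton_self _))

lemma natCast_smul_one_eq (t : ℕ) :
    (t : K) • (1 : Fin M → K) =
      ∑ i ∈ Icc 1 (t + 1), (1 - unitVec K M i) - ∑ i ∈ Icc (t + 2) M, unitVec K M i := by
  funext k
  have hk := k.isLt
  rw [Finset.sum_sub_distrib, Pi.sub_apply, Pi.sub_apply, sum_unitVec_apply, sum_unitVec_apply,
    Finset.sum_const, Nat.card_Icc]
  simp only [Pi.smul_apply, Pi.one_apply, smul_eq_mul, mul_one, nsmul_eq_mul, Nat.add_sub_cancel,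
    mem_Icc]
  by_cases hkt : (k : ℕ) + 1 ≤ t + 1
  · rw [if_pos ⟨by omega, hkt⟩, if_neg (by omega)]
    simp
  · rw [if_neg (by omega), if_pos (by omega)]
    simp

end Ring

section Field

variable {K : Type*} [Field K] {M : ℕ}

lemma eH_coordLine {i : ℕ} (hi : i ∈ Icc 1 M) : eH (coordLine K M i) = 1 := by
  rw [eH, coordLine, finrank_span_singleton (unitVec_ne_zero hi), Nat.cast_one]

lemma eH_diagLine (hM : 0 < M) : eH (diagLine K M) = 1 := by
  have : (1 : Fin M → K) ≠ 0 := fun h => one_ne_zero (congrFun h ⟨0, hM⟩)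
  rw [eH, diagLine, finrank_span_singleton this, Nat.cast_one]

lemma eH_top : eH (⊤ : Submodule K (Fin M → K)) = M := by
  rw [eH, finrank_top, Module.finrank_fin_fun]

lemma eH_bot_s10 : eH (⊥ : Submodule K (Fin M → K)) = 0 := by
  rw [eH, finrank_bot, Nat.cast_zero]

lemma sum_diagSubCoordLine_add_sum_coordLine_eq_top {t : ℕ} (ht : (t : K) ≠ 0) :
    (∑ i ∈ Icc 1 (t + 1), diagSubCoordLine K M i) + ∑ i ∈ Icc (t + 2) M, coordLine K M i = ⊤ := by
  set T := (∑ i ∈ Icc 1 (t + 1), diagSubCoordLine K M i) + ∑ i ∈ Icc (t + 2) M, coordLine K M i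
  have hB : ∀ i ∈ Icc 1 (t + 1), 1 - unitVec K M i ∈ T := fun i hi =>
    mem_sup_left (le_finsetSum _ hi (mem_span_singleton_self _))
  have hA : ∀ i ∈ Icc (t + 2) M, unitVec K M i ∈ T := fun _ hi =>
    mem_sup_right (unitVec_mem_sum_coordLine hi)
  have hone : (1 : Fin M → K) ∈ T := by
    refine (smul_mem_iff T ht).mp ?_
    rw [natCast_smul_one_eq]
    exact sub_mem (sum_mem hB) (sum_mem hA)
  refine eq_top_of_unitVec_mem fun i hi => ?_
  rw [mem_Icc] at hi
  by_cases hit : i ≤ t + 1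
  · simpa using sub_mem hone (hB i (mem_Icc.mpr ⟨hi.1, hit⟩))
  · exact hA i (mem_Icc.mpr ⟨by omega, hi.2⟩)

lemma lhsA_eq {t : ℕ} (ht : (t : K) ≠ 0) (hM : 0 < M) :
    lhsA t M (coordLine K M) (diagSubCoordLine K M) (diagLine K M) =
      M + (t + 2) * (M - t - 1) := by
  rw [lhsA, sum_diagSubCoordLine_add_sum_coordLine_eq_top ht, eH_top, eH_diagLine hM, mul_one]

lemma rhsA_eq {t : ℕ} (htM : t + 1 ≤ M) :
    rhsA t M (coordLine K M) (diagSubCoordLine K M) (diagLine K M) =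
      M - 1 + (t + 2) * (M - t - 1) := by
  have hdims : ∑ i ∈ Icc (t + 2) M, eH (coordLine K M i) = M - t - 1 := by
    rw [Finset.sum_congr rfl fun i hi => eH_coordLine (by simp at hi ⊢; omega)]
    simp only [Finset.sum_const, Nat.card_Icc, nsmul_eq_mul, mul_one]
    omega
  have hcoord : ∑ i ∈ Icc 1 M, eH ((∑ j ∈ (Icc 1 M).erase i, coordLine K M j) ⊓ diagLine K M)
      = 0 :=
    Finset.sum_eq_zero fun i hi => by rw [sum_coordLine_erase_inf_diagLine hi, eH_bot_s10]
  rw [rhsA]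
  simp only [Submodule.add_eq_sup]
  rw [hdims, hcoord, sum_coordLine_Icc, top_inf_eq, sup_top_eq, eH_top,
    eH_diagLine (by omega), Finset.sum_eq_zero (s := Icc 1 (t + 1)) fun i hi => ?_]
  · ring
  have hiM : i ∈ Icc 1 M := by simp at hi ⊢; omega
  have hprev : (∑ j ∈ Icc 1 (i - 1), coordLine K M j) ⊓ coordLine K M i = ⊥ := by
    simpa using sum_coordLine_inf_eq_bot (K := K) (M := M) (s := Icc 1 (i - 1)) (u := {i})
      (by simp; omega)
  rw [sup_eq_right.mpr (diagSubCoordLine_le_sum_erase hiM),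
    sup_eq_right.mpr (diagSubCoordLine_le_coordLine_sup_diagLine i), hprev,
    sum_coordLine_inf_eq_bot (by simp [disjoint_left]; omega), eH_bot_s10]
  ring

end Field

theorem ineqA_fails_of_char_not_dvd_general (n t M : ℕ)
    (ht : t ≤ (n - 1) / 2 - 1) (hM : M = n - t - 2)
    (p : ℕ) [Fact p.Prime] (hpt : ¬ p ∣ t)
    (e : ℕ → (Fin M → ZMod p)) (he : ∀ i j, e i j = if (j : ℕ) + 1 = i then 1 else 0)
    (c : Fin M → ZMod p) (hc : c = fun _ => 1)
    (A B : ℕ → Submodule (ZMod p) (Fin M → ZMod p)) (C : Submodule (ZMod p) (Fin M → ZMod p))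
    (hA : ∀ i, A i = Submodule.span (ZMod p) {e i})
    (hB : ∀ i, B i = Submodule.span (ZMod p) {c - e i})
    (hC : C = Submodule.span (ZMod p) {c}) :
    lhsA t M A B C = rhsA t M A B C + 1 := by
  have htp : (t : ZMod p) ≠ 0 := by rwa [Ne, ZMod.natCast_eq_zero_iff]
  have htM : t + 1 ≤ M := by
    have : t ≠ 0 := by rintro rfl; exact hpt (dvd_zero p)
    omega
  obtain rfl : e = unitVec (ZMod p) M := funext fun i => funext (he i)
  obtain rfl : c = 1 := hc
  obtain rfl : A = coordLine (ZMod p) M := funext hA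
  obtain rfl : B = diagSubCoordLine (ZMod p) M := funext hB
  obtain rfl : C = diagLine (ZMod p) M := hC
  rw [lhsA_eq htp (by omega), rhsA_eq htM]
  ring

/-- Counterexample to inequality (a) in characteristic `p ∤ t`: for the
subspaces `A_i = ⟨e_i⟩`, `B_i = ⟨c − e_i⟩`, `C = ⟨c⟩` of `GF(p)^M`, the
left-hand side of (a) exceeds the right-hand side by exactly `1`. -/
theorem ineqA_fails_of_char_not_dvd (n t M : ℕ) (hn : 7 ≤ n) (ht2 : 2 ≤ t)
    (ht : t ≤ (n - 1) / 2 - 1) (hM : M = n - t - 2)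
    (p : ℕ) [Fact p.Prime] (hpt : ¬ p ∣ t)
    (e : ℕ → (Fin M → ZMod p)) (he : ∀ i j, e i j = if (j : ℕ) + 1 = i then 1 else 0)
    (c : Fin M → ZMod p) (hc : c = fun _ => 1)
    (A B : ℕ → Submodule (ZMod p) (Fin M → ZMod p)) (C : Submodule (ZMod p) (Fin M → ZMod p))
    (hA : ∀ i, A i = Submodule.span (ZMod p) {e i})
    (hB : ∀ i, B i = Submodule.span (ZMod p) {c - e i})
    (hC : C = Submodule.span (ZMod p) {c}) :
    lhsA t M A B C = rhsA t M A B C + 1 :=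
  ineqA_fails_of_char_not_dvd_general n t M ht hM p hpt e he c hc A B C hA hB hC
end

section
/- Let n ≥ 7 and let t be an integer with 2 ≤ t ≤ ⌊(n−1)/2⌋ − 1, and set M := n − t − 2. Let p be a prime dividing t, let F = GF(p) and V = F^M with standard basis e_1,…,e_M and c := e_1 + ⋯ + e_M. Define the subspaces A_i := span{e_i} for 1 ≤ i ≤ M, B_i := span{c − e_i} for 1 ≤ i ≤ t+1, and C := span{c}. Then inequality (b) fails for these subspaces; in fact M·H(C) = M while the right-hand side of the M-scaled inequality equals M − 1. -/
/-! With `A_i`, `B_i`, `C` spanned by `e_i`, `c - e_i` and `c = Σ e_i`, every term inside the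
bracket `M·(…)` vanishes: `C ≤ A_i + B_i`, `B_i ≤ Σ_{j≠i} A_j`, coordinate subspaces with disjoint
supports meet trivially, and `c` lies in no proper coordinate subspace. What remains is
`H(B_1,…,B_{t+1},A_{t+2},…,A_M)`. Since `t = 0` in `F`,
`Σ_{i=2}^{t+1} (c - e_i) = -Σ_{i=2}^{t+1} e_i`, so `c - e_1` is a combination of the other `M - 1`
generators, while together with `e_1` they span `V`; hence that dimension is
`M - 1 < M = M·H(C)`. -/

open Finset

variable {F V : Type*} [Field F] [AddCommGroup V] [Module F V]

/-- Left-hand side of inequality (b): `M·H(C)`. -/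
noncomputable def lhsB (t M : ℕ) (A B : ℕ → Submodule F V) (C : Submodule F V) : ℤ :=
  (M : ℤ) * eH C

/-- Right-hand side of the `M`-scaled inequality (b):
`H(B_1,…,B_{t+1},A_{t+2},…,A_M)
 + M·( H(C | A_1,…,A_M) + Σ_{i=1}^{M} I(Σ_{j≠i} A_j ; C)
    + Σ_{i=2}^{t+1} I(A_1+⋯+A_{i−1} ; A_i)
    + Σ_{i=1}^{t+1} ( H(C | A_i, B_i) + H(B_i | A_j : j≠i)
        + I(A_1+⋯+A_i ; A_{i+1}+⋯+A_M) ) )`. -/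
noncomputable def rhsB (t M : ℕ) (A B : ℕ → Submodule F V) (C : Submodule F V) : ℤ :=
  eH ((∑ i ∈ Icc 1 (t+1), B i) + ∑ i ∈ Icc (t+2) M, A i)
  + (M : ℤ) *
      ((eH (C + ∑ i ∈ Icc 1 M, A i) - eH (∑ i ∈ Icc 1 M, A i))
        + ∑ i ∈ Icc 1 M, eH ((∑ j ∈ (Icc 1 M).erase i, A j) ⊓ C)
        + ∑ i ∈ Icc 2 (t+1), eH ((∑ j ∈ Icc 1 (i-1), A j) ⊓ A i)
        + ∑ i ∈ Icc 1 (t+1),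
            ((eH (C + (A i + B i)) - eH (A i + B i))
              + (eH (B i + ∑ j ∈ (Icc 1 M).erase i, A j) - eH (∑ j ∈ (Icc 1 M).erase i, A j))
              + eH ((∑ j ∈ Icc 1 i, A j) ⊓ (∑ j ∈ Icc (i+1) M, A j))))

/-- Inequality (b) of the paper (in `M`-scaled form). -/
def IneqB (t M : ℕ) (A B : ℕ → Submodule F V) (C : Submodule F V) : Prop :=
  lhsB t M A B C ≤ rhsB t M A B C

open Submodule Module

lemma eH_inf_eq_zero_of_disjoint {X Y : Submodule F V} (h : Disjoint X Y) : eH (X ⊓ Y) = 0 := by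
  rw [eH, h.eq_bot, finrank_bot, Nat.cast_zero]

lemma eH_add_sub_eH_eq_zero_of_le {X Y : Submodule F V} (h : X ≤ Y) : eH (X + Y) - eH Y = 0 := by
  rw [Submodule.add_eq_sup, sup_eq_right.mpr h, sub_self]

lemma eH_span_singleton {x : V} (hx : x ≠ 0) : eH (span F {x}) = 1 := by
  rw [eH, finrank_span_singleton hx, Nat.cast_one]

lemma finrank_le_finrank_add_one_of_sup_span_singleton_eq_top [FiniteDimensional F V]
    {U : Submodule F V} {x : V} (h : U ⊔ span F {x} = ⊤) : finrank F V ≤ finrank F U + 1 := by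
  calc finrank F V = finrank F ↥(U ⊔ span F {x}) := by rw [h, finrank_top]
    _ ≤ finrank F U + finrank F (span F {x}) := finrank_add_le_finrank_add_finrank _ _
    _ ≤ finrank F U + 1 := by
        gcongr
        simpa using finrank_span_le_card (R := F) ({x} : Set V)

lemma sum_span_singleton_eq_span_image (v : ℕ → V) (S : Finset ℕ) :
    ∑ i ∈ S, span F {v i} = span F (v '' S) := by
  induction S using Finset.induction with
  | empty => simp
  | insert _ _ h ih =>
      rw [sum_insert h, ih, coe_insert, Set.image_insert_eq, span_insert, Submodule.add_eq_sup]

lemma finrank_span_image_union_le (f g : ℕ → V) (S T : Finset ℕ) :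
    finrank F ↥(span F (f '' ↑S ∪ g '' ↑T)) ≤ #S + #T := by
  classical
  calc _ = finrank F ↥(span F (↑(S.image f ∪ T.image g) : Set V)) := by
        rw [coe_union, coe_image, coe_image]
    _ ≤ #(S.image f ∪ T.image g) := finrank_span_finset_le_card _
    _ ≤ #S + #T := (card_union_le _ _).trans (add_le_add card_image_le card_image_le)

lemma span_singleton_le_span_singleton_add_span_singleton_sub (x y : V) :
    span F {y} ≤ span F {x} + span F {y - x} := by
  rw [span_singleton_le_iff_mem, Submodule.add_eq_sup]
  simpa using add_mem_sup (mem_span_singleton_self x) (mem_span_singleton_self (y - x))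

section LinearIndepOn

variable {v : ℕ → V} {s : Finset ℕ}

lemma finrank_eq_card_of_span_image_eq_top (hv : LinearIndepOn F v s)
    (hspan : span F (v '' s) = ⊤) : finrank F V = #s := by
  rw [← finrank_top, ← hspan, Set.image_eq_range, finrank_span_eq_card hv.linearIndependent]
  simp

lemma finiteDimensional_of_span_image_eq_top (hspan : span F (v '' s) = ⊤) :
    FiniteDimensional F V :=
  Module.finite_def.mpr (hspan ▸ fg_span (s.finite_toSet.image v))

lemma disjoint_sum_span_singleton (hv : LinearIndepOn F v s) {S T : Finset ℕ} (hS : S ⊆ s)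
    (hT : T ⊆ s) (hST : Disjoint S T) :
    Disjoint (∑ i ∈ S, span F {v i}) (∑ i ∈ T, span F {v i}) := by
  rw [sum_span_singleton_eq_span_image, sum_span_singleton_eq_span_image]
  refine ((linearIndepOn_union_iff (disjoint_coe.mpr hST)).mp (hv.mono ?_)).2.2
  exact Set.union_subset (coe_subset.mpr hS) (coe_subset.mpr hT)

lemma sum_notMem_sum_span_singleton (hv : LinearIndepOn F v s) {i : ℕ}
    (hi : i ∈ s) {S : Finset ℕ} (hS : S ⊆ s.erase i) :
    ∑ j ∈ s, v j ∉ ∑ j ∈ S, span F {v j} := by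
  intro hmem
  apply hv.notMem_span hi
  rw [← coe_erase, ← sub_sub_cancel (∑ j ∈ s, v j) (v i), ← sum_erase_eq_sub hi]
  rw [sum_span_singleton_eq_span_image] at hmem
  exact sub_mem (span_mono (Set.image_mono (coe_subset.mpr hS)) hmem)
    (sum_mem fun j hj => subset_span ⟨j, hj, rfl⟩)

lemma span_singleton_sum_sub_le_sum_erase {i : ℕ} (hi : i ∈ s) :
    span F {∑ j ∈ s, v j - v i} ≤ ∑ j ∈ s.erase i, span F {v j} := by
  rw [span_singleton_le_iff_mem, ← sum_erase_eq_sub hi, sum_span_singleton_eq_span_image]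
  exact sum_mem fun j hj => subset_span ⟨j, hj, rfl⟩

lemma sum_ne_zero_of_linearIndepOn (hv : LinearIndepOn F v s) (hs : s.Nonempty) :
    ∑ j ∈ s, v j ≠ 0 := by
  obtain ⟨i, hi⟩ := hs
  intro h
  exact sum_notMem_sum_span_singleton hv hi (empty_subset _) (by rw [h]; exact zero_mem _)

end LinearIndepOn

theorem lhsB_span_singleton {t M : ℕ} {A B : ℕ → Submodule F V} {c : V} (hc : c ≠ 0) :
    lhsB t M A B (span F {c}) = M := by
  rw [lhsB, eH_span_singleton hc, mul_one]

section Counterexample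

variable {v : ℕ → V} {c : V} {t M : ℕ}

lemma sub_one_eq_neg_sum_sub_add_sum (hc : ∑ i ∈ Icc 1 M, v i = c) (htM : t + 1 ≤ M)
    (ht : (t : F) = 0) :
    c - v 1 = -∑ j ∈ Icc 2 (t + 1), (c - v j) + ∑ j ∈ Icc (t + 2) M, v j := by
  have hsplit : Icc 1 M = insert 1 (Icc 2 (t + 1) ∪ Icc (t + 2) M) := by
    ext; simp only [mem_insert, mem_union, mem_Icc]; omega
  have hdisj : Disjoint (Icc 2 (t + 1)) (Icc (t + 2) M) :=
    disjoint_left.mpr fun j hj hj' => by simp only [mem_Icc] at hj hj'; omega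
  have htc : ∑ _j ∈ Icc 2 (t + 1), c = 0 := by
    rw [sum_const, Nat.card_Icc, show t + 1 + 1 - 2 = t by omega, ← Nat.cast_smul_eq_nsmul F,
      ht, zero_smul]
  rw [sum_sub_distrib, htc, ← hc, hsplit, sum_insert (by simp), sum_union hdisj]
  abel

lemma span_image_sub_union_le_of_natCast_eq_zero (hc : ∑ i ∈ Icc 1 M, v i = c)
    (htM : t + 1 ≤ M) (ht : (t : F) = 0) :
    span F ((fun i => c - v i) '' ↑(Icc 1 (t + 1)) ∪ v '' ↑(Icc (t + 2) M))
      ≤ span F ((fun i => c - v i) '' ↑(Icc 2 (t + 1)) ∪ v '' ↑(Icc (t + 2) M)) := by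
  rw [span_le]
  rintro _ (⟨i, hi, rfl⟩ | ⟨j, hj, rfl⟩)
  · obtain rfl | hi2 : i = 1 ∨ i ∈ Icc 2 (t + 1) := by
      simp only [coe_Icc, Set.mem_Icc, mem_Icc] at hi ⊢; omega
    · rw [show (fun i => c - v i) 1 = _ from sub_one_eq_neg_sum_sub_add_sum hc htM ht]
      exact add_mem (neg_mem (sum_mem fun j hj => subset_span (Or.inl ⟨j, hj, rfl⟩)))
        (sum_mem fun j hj => subset_span (Or.inr ⟨j, hj, rfl⟩))
    · exact subset_span (Or.inl ⟨i, hi2, rfl⟩)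
  · exact subset_span (Or.inr ⟨j, hj, rfl⟩)

lemma span_image_sub_union_sup_span_singleton_eq_top (hspan : span F (v '' ↑(Icc 1 M)) = ⊤) :
    span F ((fun i => c - v i) '' ↑(Icc 1 (t + 1)) ∪ v '' ↑(Icc (t + 2) M)) ⊔ span F {v 1}
      = ⊤ := by
  rw [eq_top_iff, ← hspan, span_le]
  rintro _ ⟨j, hj, rfl⟩
  simp only [coe_Icc, Set.mem_Icc] at hj
  obtain rfl | hj1 : j = 1 ∨ 2 ≤ j := by omega
  · exact mem_sup_right (mem_span_singleton_self _)
  by_cases hjt : j ≤ t + 1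
  · rw [show v j = (c - v 1) - (c - v j) + v 1 by abel]
    refine add_mem (mem_sup_left (sub_mem ?_ ?_)) (mem_sup_right (mem_span_singleton_self _))
    · exact subset_span (Or.inl ⟨1, by simp only [coe_Icc, Set.mem_Icc]; omega, rfl⟩)
    · exact subset_span (Or.inl ⟨j, by simp only [coe_Icc, Set.mem_Icc]; omega, rfl⟩)
  · exact mem_sup_left (subset_span (Or.inr ⟨j, by simp only [coe_Icc, Set.mem_Icc]; omega, rfl⟩))

lemma finrank_sum_span_sub_add_sum_span (hspan : span F (v '' ↑(Icc 1 M)) = ⊤)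
    (hv : LinearIndepOn F v ↑(Icc 1 M)) (hc : ∑ i ∈ Icc 1 M, v i = c) (htM : t + 1 ≤ M)
    (ht : (t : F) = 0) :
    finrank F ↥((∑ i ∈ Icc 1 (t + 1), span F {c - v i}) + ∑ i ∈ Icc (t + 2) M, span F {v i})
      = M - 1 := by
  have : FiniteDimensional F V := finiteDimensional_of_span_image_eq_top hspan
  rw [sum_span_singleton_eq_span_image (fun i => c - v i), sum_span_singleton_eq_span_image,
    Submodule.add_eq_sup, ← span_union]
  apply le_antisymm
  · calc _ ≤ _ := Submodule.finrank_mono (span_image_sub_union_le_of_natCast_eq_zero hc htM ht)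
      _ ≤ #(Icc 2 (t + 1)) + #(Icc (t + 2) M) := finrank_span_image_union_le _ _ _ _
      _ = M - 1 := by simp only [Nat.card_Icc]; omega
  · have := finrank_le_finrank_add_one_of_sup_span_singleton_eq_top
      (span_image_sub_union_sup_span_singleton_eq_top (c := c) (t := t) hspan)
    rw [finrank_eq_card_of_span_image_eq_top hv hspan, Nat.card_Icc] at this
    omega

theorem rhsB_span_eq_sub_one (hspan : span F (v '' ↑(Icc 1 M)) = ⊤)
    (hv : LinearIndepOn F v ↑(Icc 1 M)) (hc : ∑ i ∈ Icc 1 M, v i = c) (htM : t + 1 ≤ M)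
    (ht : (t : F) = 0) :
    rhsB t M (fun i => span F {v i}) (fun i => span F {c - v i}) (span F {c}) = M - 1 := by
  have hCA : eH (span F {c} + ∑ i ∈ Icc 1 M, span F {v i})
      - eH (∑ i ∈ Icc 1 M, span F {v i}) = 0 :=
    eH_add_sub_eH_eq_zero_of_le (by rw [sum_span_singleton_eq_span_image, hspan]; exact le_top)
  have hAC : ∑ i ∈ Icc 1 M, eH ((∑ j ∈ (Icc 1 M).erase i, span F {v j}) ⊓ span F {c}) = 0 :=
    sum_eq_zero fun i hi => eH_inf_eq_zero_of_disjoint <| disjoint_span_singleton.mpr fun h =>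
      absurd h (hc ▸ sum_notMem_sum_span_singleton hv hi subset_rfl)
  have hAA : ∑ i ∈ Icc 2 (t + 1), eH ((∑ j ∈ Icc 1 (i - 1), span F {v j}) ⊓ span F {v i}) = 0 :=
    sum_eq_zero fun i hi => by
      simp only [mem_Icc] at hi
      rw [← sum_singleton (fun j => span F {v j}) i]
      refine eH_inf_eq_zero_of_disjoint (disjoint_sum_span_singleton hv
        (Icc_subset_Icc le_rfl (by omega)) (by simp only [singleton_subset_iff, mem_Icc]; omega)
        (disjoint_singleton_right.mpr ?_))
      simp only [mem_Icc]; omega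
  have hABC : ∀ i ∈ Icc 1 (t + 1),
      (eH (span F {c} + (span F {v i} + span F {c - v i})) - eH (span F {v i} + span F {c - v i}))
      + (eH (span F {c - v i} + ∑ j ∈ (Icc 1 M).erase i, span F {v j})
          - eH (∑ j ∈ (Icc 1 M).erase i, span F {v j}))
      + eH ((∑ j ∈ Icc 1 i, span F {v j}) ⊓ (∑ j ∈ Icc (i + 1) M, span F {v j})) = 0 := by
    intro i hi
    simp only [mem_Icc] at hi
    have hiM : i ∈ Icc 1 M := by simp only [mem_Icc]; omega
    have hB : span F {c - v i} ≤ ∑ j ∈ (Icc 1 M).erase i, span F {v j} :=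
      hc ▸ span_singleton_sum_sub_le_sum_erase hiM
    have hA : Disjoint (∑ j ∈ Icc 1 i, span F {v j}) (∑ j ∈ Icc (i + 1) M, span F {v j}) :=
      disjoint_sum_span_singleton hv (Icc_subset_Icc le_rfl (by omega))
        (Icc_subset_Icc (by omega) le_rfl)
        (disjoint_left.mpr fun j hj hj' => by simp only [mem_Icc] at hj hj'; omega)
    rw [eH_add_sub_eH_eq_zero_of_le
        (span_singleton_le_span_singleton_add_span_singleton_sub (v i) c),
      eH_add_sub_eH_eq_zero_of_le hB,
      eH_inf_eq_zero_of_disjoint hA, add_zero, add_zero]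
  rw [rhsB, eH, finrank_sum_span_sub_add_sum_span hspan hv hc htM ht, hCA, hAC, hAA,
    sum_eq_zero hABC, Nat.cast_sub (by omega : 1 ≤ M)]
  ring

end Counterexample

section StandardBasis

variable {M : ℕ} {e : ℕ → Fin M → F}

lemma coe_Icc_one_eq_range :
    (↑(Icc 1 M) : Set ℕ) = Set.range (fun k : Fin M => (k : ℕ) + 1) := by
  ext i
  simp only [coe_Icc, Set.mem_Icc, Set.mem_range]
  exact ⟨fun h => ⟨⟨i - 1, by omega⟩, by simp only; omega⟩, by rintro ⟨k, rfl⟩; omega⟩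

lemma comp_add_one_eq_basisFun (he : ∀ i j, e i j = if (j : ℕ) + 1 = i then 1 else 0) :
    (fun k : Fin M => e (k + 1)) = Pi.basisFun F (Fin M) := by
  funext k j
  rw [he, Pi.basisFun_apply, Pi.single_apply]
  simp only [add_left_inj, Fin.ext_iff]

lemma linearIndepOn_Icc_of_apply_eq_ite (he : ∀ i j, e i j = if (j : ℕ) + 1 = i then 1 else 0) :
    LinearIndepOn F e ↑(Icc 1 M) := by
  rw [coe_Icc_one_eq_range, linearIndepOn_range_iff fun k l h => Fin.ext (by simpa using h)]
  rw [Function.comp_def, comp_add_one_eq_basisFun he]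
  exact (Pi.basisFun F (Fin M)).linearIndependent

lemma span_image_Icc_eq_top_of_apply_eq_ite
    (he : ∀ i j, e i j = if (j : ℕ) + 1 = i then 1 else 0) :
    span F (e '' ↑(Icc 1 M)) = ⊤ := by
  rw [coe_Icc_one_eq_range, ← Set.range_comp, Function.comp_def, comp_add_one_eq_basisFun he,
    Basis.span_eq]

lemma sum_Icc_eq_one_of_apply_eq_ite (he : ∀ i j, e i j = if (j : ℕ) + 1 = i then 1 else 0) :
    ∑ i ∈ Icc 1 M, e i = fun _ => 1 := by
  funext j
  rw [Finset.sum_apply]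
  simp only [he, sum_ite_eq, mem_Icc]
  rw [if_pos (by omega)]

end StandardBasis

theorem ineqB_fails_of_char_dvd_general (n t M : ℕ) (ht2 : 2 ≤ t)
    (ht : t ≤ (n - 1) / 2 - 1) (hM : M = n - t - 2)
    (p : ℕ) [Fact p.Prime] (hpt : p ∣ t)
    (e : ℕ → (Fin M → ZMod p)) (he : ∀ i j, e i j = if (j : ℕ) + 1 = i then 1 else 0)
    (c : Fin M → ZMod p) (hc : c = fun _ => 1)
    (A B : ℕ → Submodule (ZMod p) (Fin M → ZMod p)) (C : Submodule (ZMod p) (Fin M → ZMod p))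
    (hA : ∀ i, A i = Submodule.span (ZMod p) {e i})
    (hB : ∀ i, B i = Submodule.span (ZMod p) {c - e i})
    (hC : C = Submodule.span (ZMod p) {c}) :
    lhsB t M A B C = (M : ℤ) ∧ rhsB t M A B C = (M : ℤ) - 1 := by
  have htM : t + 1 ≤ M := by omega
  have hv := linearIndepOn_Icc_of_apply_eq_ite he
  have hsum : ∑ i ∈ Icc 1 M, e i = c := hc ▸ sum_Icc_eq_one_of_apply_eq_ite he
  obtain rfl : A = fun i => span (ZMod p) {e i} := funext hA
  obtain rfl : B = fun i => span (ZMod p) {c - e i} := funext hB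
  subst hC
  refine ⟨lhsB_span_singleton ?_, rhsB_span_eq_sub_one
    (span_image_Icc_eq_top_of_apply_eq_ite he) hv hsum htM ((ZMod.natCast_eq_zero_iff t p).mpr hpt)⟩
  exact hsum ▸ sum_ne_zero_of_linearIndepOn hv (nonempty_Icc.mpr (by omega))

/-- Counterexample to inequality (b) in characteristic `p ∣ t`: for the
subspaces `A_i = ⟨e_i⟩`, `B_i = ⟨c − e_i⟩`, `C = ⟨c⟩` of `GF(p)^M`, the
left-hand side `M·H(C)` equals `M` while the right-hand side of the
`M`-scaled inequality (b) equals `M − 1`. -/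
theorem ineqB_fails_of_char_dvd (n t M : ℕ) (hn : 7 ≤ n) (ht2 : 2 ≤ t)
    (ht : t ≤ (n - 1) / 2 - 1) (hM : M = n - t - 2)
    (p : ℕ) [Fact p.Prime] (hpt : p ∣ t)
    (e : ℕ → (Fin M → ZMod p)) (he : ∀ i j, e i j = if (j : ℕ) + 1 = i then 1 else 0)
    (c : Fin M → ZMod p) (hc : c = fun _ => 1)
    (A B : ℕ → Submodule (ZMod p) (Fin M → ZMod p)) (C : Submodule (ZMod p) (Fin M → ZMod p))
    (hA : ∀ i, A i = Submodule.span (ZMod p) {e i})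
    (hB : ∀ i, B i = Submodule.span (ZMod p) {c - e i})
    (hC : C = Submodule.span (ZMod p) {c}) :
    lhsB t M A B C = (M : ℤ) ∧ rhsB t M A B C = (M : ℤ) - 1 :=
  ineqB_fails_of_char_dvd_general n t M ht2 ht hM p hpt e he c hc A B C hA hB hC
end
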